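/- arXiv:0704.0588 — 4 statements merged into one kernel-verified Lean document; each statement's English description precedes it below -/
import Mathlib

section
/- For a finite set Y with d elements and any type ν (an empirical probability measure arising from a sequence in Y^N), the number of sequences in Y^N having type ν is bounded below by (N+1)^{-d} · e^{N·S(ν)} and above by e^{N·S(ν)}, where S(ν) = -∑_{y∈Y} ν(y) log ν(y) is the Shannon entropy. -/
open Finset

private lemma pow_mul_factorial_le (k m : ℕ) :
    k ^ m * k.factorial ≤ k ^ k * m.factorial := by
  rcases le_total m k with h | h
  · have h1 : m.factorial * k.descFactorial (k - m) = k.factorial := by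
      have := Nat.factorial_mul_descFactorial (Nat.sub_le k m)
      rwa [show k - (k - m) = m by omega] at this
    calc k ^ m * k.factorial = k ^ m * (m.factorial * k.descFactorial (k - m)) := by rw [h1]
      _ ≤ k ^ m * (m.factorial * k ^ (k - m)) := by
          exact Nat.mul_le_mul_left _ (Nat.mul_le_mul_left _ (Nat.descFactorial_le_pow _ _))
      _ = k ^ m * k ^ (k - m) * m.factorial := by ring
      _ = k ^ k * m.factorial := by rw [← pow_add, show m + (k - m) = k by omega]
  · have h1 : k.factorial * (k + 1) ^ (m - k) ≤ (k + (m - k)).factorial :=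
      Nat.factorial_mul_pow_le_factorial
    rw [show k + (m - k) = m by omega] at h1
    calc k ^ m * k.factorial = k ^ k * (k ^ (m - k) * k.factorial) := by
          rw [← mul_assoc, ← pow_add, show k + (m - k) = m by omega]
      _ ≤ k ^ k * ((k + 1) ^ (m - k) * k.factorial) := by
          exact Nat.mul_le_mul_left _ (Nat.mul_le_mul_right _
            (Nat.pow_le_pow_left (Nat.le_succ k) _))
      _ ≤ k ^ k * m.factorial := by
          exact Nat.mul_le_mul_left _ (by rwa [mul_comm] at h1)

private lemma card_typeclass {Y : Type*} [Fintype Y] [DecidableEq Y] {N : ℕ}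
    (w : Fin N → Y) :
    (Nat.card {y : Fin N → Y // ∀ t : Y,
        (Finset.univ.filter fun j => y j = t).card
          = (Finset.univ.filter fun j => w j = t).card})
      * ∏ t, ((Finset.univ.filter fun j => w j = t).card).factorial = N.factorial := by
  classical
  -- the type class is the orbit of w under the DomMulAct action of Perm (Fin N)
  have hmem : ∀ y : Fin N → Y,
      (∀ t : Y, (Finset.univ.filter fun j => y j = t).card
          = (Finset.univ.filter fun j => w j = t).card)
        ↔ y ∈ MulAction.orbit (Equiv.Perm (Fin N))ᵈᵐᵃ w := by
    intro y
    constructor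
    · intro h
      have e : ∀ t : Y, {j // y j = t} ≃ {j // w j = t} := fun t =>
        Fintype.equivOfCardEq (by
          rw [Fintype.card_subtype, Fintype.card_subtype, h t])
      refine ⟨DomMulAct.mk (Equiv.ofFiberEquiv e), ?_⟩
      funext j
      show w (Equiv.ofFiberEquiv e j) = y j
      exact Equiv.ofFiberEquiv_map e j
    · rintro ⟨g, rfl⟩
      intro t
      set σ : Equiv.Perm (Fin N) := DomMulAct.mk.symm g with hσ
      show (Finset.univ.filter fun j => w (σ j) = t).card
        = (Finset.univ.filter fun j => w j = t).card
      refine Finset.card_bij' (fun j _ => σ j) (fun j _ => σ.symm j) ?_ ?_ ?_ ?_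
      · intro j hj
        simp only [mem_filter, mem_univ, true_and] at hj ⊢
        exact hj
      · intro j hj
        simp only [mem_filter, mem_univ, true_and] at hj ⊢
        simpa using hj
      · intro j _; simp
      · intro j _; simp
  have horb : Nat.card {y : Fin N → Y // ∀ t : Y,
      (Finset.univ.filter fun j => y j = t).card
        = (Finset.univ.filter fun j => w j = t).card}
      = Nat.card (MulAction.orbit (Equiv.Perm (Fin N))ᵈᵐᵃ w) :=
    Nat.card_congr (Equiv.subtypeEquivRight hmem)
  have hstab : Nat.card (MulAction.stabilizer (Equiv.Perm (Fin N))ᵈᵐᵃ w)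
      = ∏ t, ((Finset.univ.filter fun j => w j = t).card).factorial := by
    have e1 : (MulAction.stabilizer (Equiv.Perm (Fin N))ᵈᵐᵃ w)
        ≃ {g : Equiv.Perm (Fin N) // w ∘ g = w} :=
      Equiv.subtypeEquiv DomMulAct.mk.symm fun g => DomMulAct.mem_stabilizer_iff
    rw [Nat.card_congr e1, Nat.card_eq_fintype_card, DomMulAct.stabilizer_card]
    exact Finset.prod_congr rfl fun t _ => by rw [Fintype.card_subtype]
  have hgrp : Nat.card (Equiv.Perm (Fin N))ᵈᵐᵃ = N.factorial := by
    rw [Nat.card_congr DomMulAct.mk.symm, Nat.card_eq_fintype_card, Fintype.card_perm,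
      Fintype.card_fin]
  have := Nat.card_congr (MulAction.orbitProdStabilizerEquivGroup (Equiv.Perm (Fin N))ᵈᵐᵃ w)
  rw [Nat.card_prod, hstab, hgrp] at this
  rw [horb, this]

/-- The number of sequences in `Y^N` of a given type `ν` is between
`(N+1)^{-d} e^{N S(ν)}` and `e^{N S(ν)}`, where `S` is the Shannon entropy. -/
theorem stmt0 {Y : Type*} [Fintype Y] [DecidableEq Y] (N : ℕ) (hN : 0 < N)
    (w : Fin N → Y) (ν : Y → ℝ)
    (hν : ∀ t, ν t = ((Finset.univ.filter fun j => w j = t).card : ℝ) / N) :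
    ((N + 1 : ℝ) ^ Fintype.card Y)⁻¹ *
        Real.exp ((N : ℝ) * (-∑ t, ν t * Real.log (ν t))) ≤
      (Nat.card {y : Fin N → Y // ∀ t : Y,
        (Finset.univ.filter fun j => y j = t).card
          = (Finset.univ.filter fun j => w j = t).card} : ℝ) ∧
    (Nat.card {y : Fin N → Y // ∀ t : Y,
        (Finset.univ.filter fun j => y j = t).card
          = (Finset.univ.filter fun j => w j = t).card} : ℝ) ≤
      Real.exp ((N : ℝ) * (-∑ t, ν t * Real.log (ν t))) := by
  classical
  set k : Y → ℕ := fun t => (Finset.univ.filter fun j => w j = t).card with hk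
  set C : ℕ := Nat.card {y : Fin N → Y // ∀ t : Y,
      (Finset.univ.filter fun j => y j = t).card
        = (Finset.univ.filter fun j => w j = t).card} with hC
  -- sum of counts is N
  have hsum : ∑ t, k t = N := by
    have := Finset.card_eq_sum_card_fiberwise
      (f := w) (s := Finset.univ) (t := Finset.univ) (fun j _ => mem_univ (w j))
    rw [Finset.card_univ, Fintype.card_fin] at this
    exact this.symm
  -- C equals the multinomial coefficient
  have hCM : C = Nat.multinomial Finset.univ k := by
    have h1 := card_typeclass w
    have h2 := Nat.multinomial_spec Finset.univ k
    rw [hsum] at h2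
    have hpos : 0 < ∏ t, (k t).factorial :=
      Finset.prod_pos fun t _ => Nat.factorial_pos _
    have h1' : C * ∏ t, (k t).factorial = N.factorial := h1
    apply Nat.eq_of_mul_eq_mul_right hpos
    rw [h1', ← h2]
    exact mul_comm _ _
  have hkmem : k ∈ Finset.piAntidiag (Finset.univ : Finset Y) N :=
    Finset.mem_piAntidiag.2 ⟨hsum, fun t _ => Finset.mem_univ t⟩
  -- multinomial theorem over ℕ
  have hmt : N ^ N = ∑ m ∈ Finset.piAntidiag (Finset.univ : Finset Y) N,
      Nat.multinomial Finset.univ m * ∏ t, k t ^ m t := by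
    have := Finset.sum_pow_eq_sum_piAntidiag (Finset.univ : Finset Y) k N
    rw [hsum] at this
    simpa using this
  -- upper bound in ℕ
  have hupperN : Nat.multinomial Finset.univ k * ∏ t, k t ^ k t ≤ N ^ N := by
    rw [hmt]
    exact Finset.single_le_sum
      (f := fun m => Nat.multinomial Finset.univ m * ∏ t, k t ^ m t)
      (fun m _ => Nat.zero_le _) hkmem
  -- each term is at most the term at k
  have hterm : ∀ m ∈ Finset.piAntidiag (Finset.univ : Finset Y) N,
      Nat.multinomial Finset.univ m * ∏ t, k t ^ m t
        ≤ Nat.multinomial Finset.univ k * ∏ t, k t ^ k t := by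
    intro m hm
    obtain ⟨hmsum, -⟩ := Finset.mem_piAntidiag.1 hm
    have hmspec := Nat.multinomial_spec Finset.univ m
    have hkspec := Nat.multinomial_spec Finset.univ k
    rw [hmsum] at hmspec
    rw [hsum] at hkspec
    have hpos : 0 < (∏ t, (m t).factorial) * ∏ t, (k t).factorial :=
      Nat.mul_pos (Finset.prod_pos fun t _ => Nat.factorial_pos _)
        (Finset.prod_pos fun t _ => Nat.factorial_pos _)
    apply Nat.le_of_mul_le_mul_right _ hpos
    have lhs_eq : Nat.multinomial Finset.univ m * (∏ t, k t ^ m t)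
          * ((∏ t, (m t).factorial) * ∏ t, (k t).factorial)
        = N.factorial * ∏ t, (k t ^ m t * (k t).factorial) := by
      rw [← hmspec, Finset.prod_mul_distrib]; ring
    have rhs_eq : Nat.multinomial Finset.univ k * (∏ t, k t ^ k t)
          * ((∏ t, (m t).factorial) * ∏ t, (k t).factorial)
        = N.factorial * ∏ t, (k t ^ k t * (m t).factorial) := by
      rw [← hkspec, Finset.prod_mul_distrib]; ring
    rw [lhs_eq, rhs_eq]
    exact Nat.mul_le_mul_left _ (Finset.prod_le_prod' fun t _ =>
      pow_mul_factorial_le (k t) (m t))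
  -- number of types
  have hcard : (Finset.piAntidiag (Finset.univ : Finset Y) N).card
      ≤ (N + 1) ^ Fintype.card Y := by
    have hsub : Finset.piAntidiag (Finset.univ : Finset Y) N
        ⊆ Fintype.piFinset fun _ : Y => Finset.range (N + 1) := by
      intro m hm
      obtain ⟨hmsum, -⟩ := Finset.mem_piAntidiag.1 hm
      rw [Fintype.mem_piFinset]
      intro t
      rw [Finset.mem_range, Nat.lt_succ_iff, ← hmsum]
      exact Finset.single_le_sum (fun _ _ => Nat.zero_le _) (Finset.mem_univ t)
    calc (Finset.piAntidiag (Finset.univ : Finset Y) N).card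
        ≤ (Fintype.piFinset fun _ : Y => Finset.range (N + 1)).card :=
          Finset.card_le_card hsub
      _ = (N + 1) ^ Fintype.card Y := by
          rw [Fintype.card_piFinset]; simp [Finset.card_range]
  -- lower bound in ℕ
  have hlowerN : N ^ N ≤ (N + 1) ^ Fintype.card Y
      * (Nat.multinomial Finset.univ k * ∏ t, k t ^ k t) := by
    rw [hmt]
    calc ∑ m ∈ Finset.piAntidiag (Finset.univ : Finset Y) N,
          Nat.multinomial Finset.univ m * ∏ t, k t ^ m t
        ≤ (Finset.piAntidiag (Finset.univ : Finset Y) N).card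
          • (Nat.multinomial Finset.univ k * ∏ t, k t ^ k t) :=
          Finset.sum_le_card_nsmul _ _ _ hterm
      _ = (Finset.piAntidiag (Finset.univ : Finset Y) N).card
          * (Nat.multinomial Finset.univ k * ∏ t, k t ^ k t) := by rw [smul_eq_mul]
      _ ≤ (N + 1) ^ Fintype.card Y
          * (Nat.multinomial Finset.univ k * ∏ t, k t ^ k t) :=
          Nat.mul_le_mul_right _ hcard
  set P : ℕ := ∏ t, k t ^ k t with hPdef
  have hPpos : 0 < P := Finset.prod_pos fun t _ => by
    rcases Nat.eq_zero_or_pos (k t) with h | h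
    · simp [h]
    · exact pow_pos h _
  have hPpos' : (0 : ℝ) < (P : ℝ) := by exact_mod_cast hPpos
  have hNpos : (0 : ℝ) < (N : ℝ) := by exact_mod_cast hN
  -- the entropy exponential equals N^N / P
  have hexp : Real.exp ((N : ℝ) * (-∑ t, ν t * Real.log (ν t)))
      = (N : ℝ) ^ N / (P : ℝ) := by
    have hterm' : ∀ t : Y, (N : ℝ) * -(ν t * Real.log (ν t))
        = Real.log ((N : ℝ) ^ k t / (k t : ℝ) ^ k t) := by
      intro t
      have hraw : ((Finset.univ.filter fun j => w j = t).card : ℝ) = ((k t : ℕ) : ℝ) := rfl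
      rw [hν t, hraw]
      rcases Nat.eq_zero_or_pos (k t) with h | h
      · simp [h]
      · have hkpos : (0 : ℝ) < (k t : ℝ) := by exact_mod_cast h
        have hrhs : Real.log ((N : ℝ) ^ k t / (k t : ℝ) ^ k t)
            = (k t : ℝ) * Real.log N - (k t : ℝ) * Real.log (k t) := by
          rw [Real.log_div (by positivity) (by positivity), Real.log_pow, Real.log_pow]
        have hlhs : Real.log ((k t : ℝ) / (N : ℝ)) = Real.log (k t) - Real.log N :=
          Real.log_div hkpos.ne' hNpos.ne'
        rw [hrhs, hlhs]
        field_simp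
        ring
    have hsum' : (N : ℝ) * (-∑ t, ν t * Real.log (ν t))
        = ∑ t, Real.log ((N : ℝ) ^ k t / (k t : ℝ) ^ k t) := by
      calc (N : ℝ) * (-∑ t, ν t * Real.log (ν t))
          = ∑ t, (N : ℝ) * -(ν t * Real.log (ν t)) := by
            rw [← Finset.sum_neg_distrib, Finset.mul_sum]
        _ = ∑ t, Real.log ((N : ℝ) ^ k t / (k t : ℝ) ^ k t) :=
            Finset.sum_congr rfl fun t _ => hterm' t
    rw [hsum', Real.exp_sum]
    have hfac : ∀ t ∈ (Finset.univ : Finset Y),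
        Real.exp (Real.log ((N : ℝ) ^ k t / (k t : ℝ) ^ k t))
          = (N : ℝ) ^ k t / (k t : ℝ) ^ k t := by
      intro t _
      apply Real.exp_log
      rcases Nat.eq_zero_or_pos (k t) with h | h
      · simp [h]
      · have : (0 : ℝ) < (k t : ℝ) := by exact_mod_cast h
        positivity
    rw [Finset.prod_congr rfl hfac, Finset.prod_div_distrib, Finset.prod_pow_eq_pow_sum, hsum]
    congr 1
    rw [hPdef]
    push_cast
    rfl
  rw [hexp]
  have hCP : (C : ℝ) * P ≤ (N : ℝ) ^ N := by
    rw [hCM]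
    exact_mod_cast hupperN
  have hNN : (N : ℝ) ^ N ≤ ((N : ℝ) + 1) ^ Fintype.card Y * ((C : ℝ) * P) := by
    rw [hCM]
    exact_mod_cast hlowerN
  constructor
  · rw [inv_mul_le_iff₀ (by positivity), div_le_iff₀ hPpos']
    calc (N : ℝ) ^ N ≤ ((N : ℝ) + 1) ^ Fintype.card Y * ((C : ℝ) * P) := hNN
      _ = ((N : ℝ) + 1) ^ Fintype.card Y * (C : ℝ) * P := by ring
  · rw [le_div_iff₀ hPpos']
    exact hCP
end

section
/- Let p be a probability measure on a finite set Y. Then S(p) = lim_{δ→0+} lim_{N→∞} (1/N) log #Δ(p;N,δ), where Δ(p;N,δ) is the set of δ-typical sequences y ∈ Y^N satisfying |ν_y(t) − p(t)| < δ for all t ∈ Y. -/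
open Filter Finset Real

set_option linter.unusedSectionVars false
set_option linter.unusedVariables false

namespace Stmt3Aux

/-! ### Union bound helper -/

lemma union_bound {α ι : Type*} [Fintype ι] [Nonempty ι] [DecidableEq ι]
    (s : Finset α) (bad : ι → Finset α) (w : α → ℝ) (hw : ∀ a, 0 ≤ w a)
    (h : ∀ a ∈ s, ∃ i, a ∈ bad i) :
    ∑ a ∈ s, w a ≤ ∑ i : ι, ∑ a ∈ bad i, w a := by
  classical
  set f : α → ι := fun a => if h' : ∃ i, a ∈ bad i then h'.choose else Classical.arbitrary ι
    with hfdef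
  have hmaps : ∀ a ∈ s, f a ∈ (univ : Finset ι) := fun a _ => mem_univ _
  rw [← Finset.sum_fiberwise_of_maps_to hmaps w]
  refine Finset.sum_le_sum fun i _ => ?_
  refine Finset.sum_le_sum_of_subset_of_nonneg ?_ fun a _ _ => hw a
  intro a ha
  rw [Finset.mem_filter] at ha
  obtain ⟨has, hfa⟩ := ha
  have h' : ∃ i, a ∈ bad i := h a has
  rw [hfdef] at hfa
  simp only [dif_pos h'] at hfa
  exact hfa ▸ h'.choose_spec

/-! ### Fekete-type superadditive convergence -/

lemma fekete (c : ℕ → ℝ) (N₀ : ℕ) (hN₀ : 1 ≤ N₀)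
    (h1 : ∀ N, N₀ ≤ N → 1 ≤ c N)
    (hsup : ∀ M N, N₀ ≤ M → N₀ ≤ N → c M * c N ≤ c (M + N))
    (B : ℝ) (hB : ∀ N, N₀ ≤ N → Real.log (c N) / N ≤ B) :
    Tendsto (fun N : ℕ => Real.log (c N) / N) atTop
      (nhds (sSup ((fun N : ℕ => Real.log (c N) / N) '' {N : ℕ | N₀ ≤ N}))) := by
  set a : ℕ → ℝ := fun N => Real.log (c N) / N with hadef
  set s : Set ℝ := a '' {N : ℕ | N₀ ≤ N} with hsdef
  set L : ℝ := sSup s with hLdef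
  have hne : s.Nonempty := ⟨a N₀, Set.mem_image_of_mem a (Set.mem_setOf.mpr (le_refl N₀))⟩
  have hbdd : BddAbove s := ⟨B, by rintro x ⟨N, hN, rfl⟩; exact hB N hN⟩
  have hub : ∀ N, N₀ ≤ N → a N ≤ L := fun N hN => le_csSup hbdd ⟨N, hN, rfl⟩
  have hcpos : ∀ N, N₀ ≤ N → (0:ℝ) < c N := fun N hN => lt_of_lt_of_le one_pos (h1 N hN)
  have hlognn : ∀ N, N₀ ≤ N → 0 ≤ Real.log (c N) :=
    fun N hN => Real.log_nonneg (h1 N hN)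
  have hann : ∀ N, N₀ ≤ N → 0 ≤ a N := by
    intro N hN
    have hN0 : (0:ℝ) < N := by
      have : (1:ℕ) ≤ N := le_trans hN₀ hN
      exact_mod_cast this
    exact div_nonneg (hlognn N hN) hN0.le
  set B' : ℝ := max B 1 with hB'def
  have hB'pos : (0:ℝ) < B' := lt_of_lt_of_le one_pos (le_max_right _ _)
  have haB' : ∀ N, N₀ ≤ N → a N ≤ B' := fun N hN => le_trans (hB N hN) (le_max_left _ _)
  rw [Metric.tendsto_atTop]
  intro ε hε
  obtain ⟨x, hxs, hx⟩ := exists_lt_of_lt_csSup hne (show L - ε/2 < L by linarith)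
  obtain ⟨m, hm, rfl⟩ := hxs
  have iterate : ∀ q r, N₀ ≤ r → c m ^ q * c r ≤ c (q * m + r) := by
    intro q
    induction q with
    | zero => intro r hr; simp
    | succ q ih =>
      intro r hr
      have h2 : c m ^ (q+1) * c r = c m * (c m ^ q * c r) := by ring
      rw [h2]
      calc c m * (c m ^ q * c r) ≤ c m * c (q * m + r) :=
            mul_le_mul_of_nonneg_left (ih r hr) (hcpos m hm).le
        _ ≤ c (m + (q * m + r)) := hsup m (q*m+r) hm (le_trans hr (Nat.le_add_left _ _))
        _ = c ((q+1) * m + r) := by ring_nf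
  have hlog_iter : ∀ (q r : ℕ), N₀ ≤ r →
      ((q : ℝ)) * Real.log (c m) + Real.log (c r) ≤ Real.log (c (q * m + r)) := by
    intro q r hr
    have h3 : Real.log (c m ^ q * c r) = q * Real.log (c m) + Real.log (c r) := by
      rw [Real.log_mul (pow_ne_zero q (hcpos m hm).ne') (hcpos r hr).ne', Real.log_pow]
    rw [← h3]
    exact Real.log_le_log (mul_pos (pow_pos (hcpos m hm) q) (hcpos r hr)) (iterate q r hr)
  set T : ℕ := max (N₀ + m) (⌈2 * (N₀ + m : ℝ) * B' / ε⌉₊) + 1 with hTdef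
  refine ⟨T, fun N hN => ?_⟩
  have hmpos : 0 < m := lt_of_lt_of_le hN₀ hm
  have hNge : N₀ + m ≤ N := le_trans (le_trans (le_max_left _ _) (Nat.le_succ _)) hN
  have hNpos : (0:ℝ) < N := by
    have : 1 ≤ N := le_trans (le_trans hN₀ (Nat.le_add_right _ _)) hNge
    exact_mod_cast this
  obtain ⟨q, r, hrge, hrlt, hNeq⟩ : ∃ q r, N₀ ≤ r ∧ r < N₀ + m ∧ N = q * m + r := by
    refine ⟨(N - N₀)/m, N - (N - N₀)/m * m, ?_, ?_, ?_⟩ <;>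
    · have h1 := Nat.div_mul_le_self (N - N₀) m
      have h2 := Nat.mod_lt (N - N₀) hmpos
      have h3 := Nat.div_add_mod' (N - N₀) m
      omega
  have key1 : (q : ℝ) * Real.log (c m) ≤ Real.log (c N) := by
    rw [hNeq]
    have := hlog_iter q r hrge
    linarith [hlognn r hrge]
  have hqm_real : ((N:ℝ) - (N₀ + m)) ≤ (q*m : ℕ) := by
    have h4 : N - r = q * m := by omega
    have h5 : ((q*m : ℕ) : ℝ) = (N:ℝ) - r := by
      rw [← h4]
      have hrN : r ≤ N := by omega
      push_cast [Nat.cast_sub hrN]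
      ring
    rw [h5]
    have : (r : ℝ) ≤ (N₀ + m : ℕ) := by exact_mod_cast hrlt.le
    push_cast at this ⊢
    linarith
  have key2 : a m - ((N₀ + m : ℝ)) * B' / N ≤ a N := by
    have ham : a m = Real.log (c m) / m := rfl
    have hmR : (0:ℝ) < m := by exact_mod_cast hmpos
    have h6 : ((q * m : ℕ) : ℝ) * a m ≤ Real.log (c N) := by
      have : ((q*m : ℕ):ℝ) * a m = q * Real.log (c m) := by
        push_cast
        rw [ham]
        field_simp
      rw [this]
      exact key1
    have h7 : (((N:ℝ) - (N₀ + m)) * a m) ≤ Real.log (c N) :=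
      le_trans (mul_le_mul_of_nonneg_right hqm_real (hann m hm)) h6
    have h8 : ((N:ℝ) - (N₀ + m)) * a m / N ≤ a N := by
      rw [hadef]
      exact div_le_div_of_nonneg_right h7 hNpos.le
    calc a m - ((N₀ + m : ℝ)) * B' / N
        ≤ a m - ((N₀ + m : ℝ)) * a m / N := by
          have hstep : ((N₀ + m : ℝ)) * a m ≤ ((N₀ + m : ℝ)) * B' := by
            refine mul_le_mul_of_nonneg_left (haB' m hm) ?_
            positivity
          have := div_le_div_of_nonneg_right hstep hNpos.le
          linarith
      _ = ((N:ℝ) - (N₀ + m)) * a m / N := by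
          field_simp
      _ ≤ a N := h8
  have hthresh : ((N₀ + m : ℝ)) * B' / N ≤ ε / 2 := by
    have hT2 : (⌈2 * (N₀ + m : ℝ) * B' / ε⌉₊ : ℝ) ≤ N := by
      have : ⌈2 * (N₀ + m : ℝ) * B' / ε⌉₊ ≤ N := by omega
      exact_mod_cast this
    have hT3 : 2 * (N₀ + m : ℝ) * B' / ε ≤ N := le_trans (Nat.le_ceil _) hT2
    have h9 := (div_le_iff₀ hε).mp hT3
    rw [div_le_div_iff₀ hNpos (by norm_num : (0:ℝ) < 2)]
    linarith
  have hlow : L - ε < a N := by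
    have := key2
    have hmL : L - ε/2 < a m := hx
    linarith [hthresh]
  have hhigh : a N ≤ L := hub N (le_trans (Nat.le_add_right _ _) hNge)
  rw [Real.dist_eq, abs_lt]
  constructor <;> linarith

/-! ### Basic counting setup -/

variable {Y : Type*} [Fintype Y] [DecidableEq Y]

def cnt {N : ℕ} (y : Fin N → Y) (t : Y) : ℕ := #(univ.filter fun j => y j = t)

def w {N : ℕ} (q : Y → ℝ) (y : Fin N → Y) : ℝ := ∏ j, q (y j)

noncomputable def typ (p : Y → ℝ) (δ : ℝ) (N : ℕ) : Finset (Fin N → Y) :=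
  @Finset.filter _ (fun y => ∀ t, |((cnt y t : ℝ)) / N - p t| < δ)
    (Classical.decPred _) univ

lemma mem_typ {p : Y → ℝ} {δ : ℝ} {N : ℕ} {y : Fin N → Y} :
    y ∈ typ p δ N ↔ ∀ t, |((cnt y t : ℝ)) / N - p t| < δ := by
  simp [typ]

lemma cnt_cast_eq_sum {N : ℕ} (y : Fin N → Y) (t : Y) :
    ((cnt y t : ℝ)) = ∑ j, if y j = t then (1:ℝ) else 0 := by
  rw [cnt, Finset.natCast_card_filter]

lemma pt_le_one (p : Y → ℝ) (hp0 : ∀ t, 0 ≤ p t) (hp1 : ∑ t, p t = 1) (t : Y) : p t ≤ 1 := by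
  rw [← hp1]
  exact Finset.single_le_sum (fun s _ => hp0 s) (Finset.mem_univ t)

lemma nonempty_of_p (p : Y → ℝ) (hp1 : ∑ t, p t = 1) : Nonempty Y := by
  by_contra h
  rw [not_nonempty_iff] at h
  rw [Finset.univ_eq_empty, Finset.sum_empty] at hp1
  exact zero_ne_one hp1

lemma w_eq_prod_pow {N : ℕ} (q : Y → ℝ) (y : Fin N → Y) :
    w q y = ∏ t, q t ^ (cnt y t) := by
  rw [w, ← Finset.prod_fiberwise_of_maps_to (g := y) (t := univ)
    (fun j _ => Finset.mem_univ (y j)) (fun j => q (y j))]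
  refine Finset.prod_congr rfl fun t _ => ?_
  calc ∏ j ∈ univ.filter fun j => y j = t, q (y j)
      = ∏ j ∈ univ.filter fun j => y j = t, q t :=
        Finset.prod_congr rfl (fun j hj => by rw [(Finset.mem_filter.mp hj).2])
    _ = q t ^ cnt y t := by rw [Finset.prod_const, cnt]

lemma sum_w {N : ℕ} (q : Y → ℝ) (hq : ∑ t, q t = 1) :
    ∑ y : Fin N → Y, w q y = 1 := by
  have := (Fintype.prod_sum (ι := Fin N) (κ := fun _ => Y) (f := fun _ s => q s)).symm
  simp only [w, this, hq, Finset.prod_const, one_pow]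

lemma w_nonneg {N : ℕ} {q : Y → ℝ} (hq : ∀ t, 0 ≤ q t) (y : Fin N → Y) : 0 ≤ w q y :=
  Finset.prod_nonneg fun _ _ => hq _

/-! ### Second moment bound -/

lemma second_moment (p : Y → ℝ) (hp0 : ∀ t, 0 ≤ p t) (hp1 : ∑ t, p t = 1)
    (N : ℕ) (t : Y) :
    ∑ y : Fin N → Y, w p y * (((cnt y t : ℝ)) - N * p t)^2 ≤ N := by
  set F : Y → ℝ := fun s => (if s = t then 1 else 0) - p t with hFdef
  set V : ℝ := ∑ s, p s * (F s)^2 with hVdef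
  have hF : ∀ y : Fin N → Y, ((cnt y t : ℝ)) - N * p t = ∑ j, F (y j) := by
    intro y
    rw [cnt_cast_eq_sum, hFdef]
    rw [Finset.sum_sub_distrib, Finset.sum_const, Finset.card_univ, Fintype.card_fin,
      nsmul_eq_mul]
  have hFmean : ∑ s, p s * F s = 0 := by
    simp only [hFdef, mul_sub, Finset.sum_sub_distrib, mul_ite, mul_one, mul_zero]
    rw [Finset.sum_ite_eq' univ t p, ← Finset.sum_mul, hp1]
    simp
  have key : ∀ i j : Fin N, (∑ y : Fin N → Y, w p y * (F (y i) * F (y j)))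
      = if i = j then V else 0 := by
    intro i j
    have hpoint : ∀ y : Fin N → Y, w p y * (F (y i) * F (y j)) =
        ∏ k, (p (y k) * ((if k = i then F (y k) else 1) * (if k = j then F (y k) else 1))) := by
      intro y
      rw [Finset.prod_mul_distrib, Finset.prod_mul_distrib,
        Finset.prod_ite_eq' univ i (fun k => F (y k)),
        Finset.prod_ite_eq' univ j (fun k => F (y k))]
      simp [w]
    have hswap : (∑ y : Fin N → Y,
        ∏ k, (p (y k) * ((if k = i then F (y k) else 1) * (if k = j then F (y k) else 1))))
        = ∏ k : Fin N, ∑ s : Y,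
          (p s * ((if k = i then F s else 1) * (if k = j then F s else 1))) :=
      (Fintype.prod_sum fun k s => p s * ((if k = i then F s else 1) * (if k = j then F s else 1))).symm
    rw [Finset.sum_congr rfl fun y _ => hpoint y, hswap]
    by_cases hij : i = j
    · subst hij
      rw [if_pos rfl]
      have : ∀ k : Fin N, (∑ s : Y,
          (p s * ((if k = i then F s else 1) * (if k = i then F s else 1))))
          = if k = i then V else 1 := by
        intro k
        by_cases hk : k = i
        · subst hk; simp [hVdef, sq]
        · simp only [if_neg hk, mul_one, hp1]
      rw [Finset.prod_congr rfl fun k _ => this k, Finset.prod_ite_eq' univ i fun _ => V]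
      simp
    · rw [if_neg hij]
      refine Finset.prod_eq_zero (Finset.mem_univ i) ?_
      simp only [if_pos rfl, if_neg hij, mul_one]
      exact hFmean
  have e1 : ∀ y : Fin N → Y, w p y * (((cnt y t : ℝ)) - N * p t)^2
      = ∑ i : Fin N, ∑ j : Fin N, w p y * (F (y i) * F (y j)) := by
    intro y
    rw [hF y, sq, Finset.sum_mul_sum, Finset.mul_sum]
    exact Finset.sum_congr rfl fun i _ => by rw [Finset.mul_sum]
  have expand : ∑ y : Fin N → Y, w p y * (((cnt y t : ℝ)) - N * p t)^2
      = ∑ i : Fin N, ∑ j : Fin N, ∑ y : Fin N → Y, w p y * (F (y i) * F (y j)) := by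
    rw [Finset.sum_congr rfl fun y _ => e1 y, Finset.sum_comm]
    exact Finset.sum_congr rfl fun i _ => Finset.sum_comm
  have hV1 : V ≤ 1 := by
    rw [hVdef, ← hp1]
    refine Finset.sum_le_sum fun s _ => ?_
    have h1 : |F s| ≤ 1 := by
      rw [hFdef, abs_le]
      constructor <;> simp only
      · have := pt_le_one p hp0 hp1 s
        split <;> nlinarith [hp0 t, pt_le_one p hp0 hp1 t]
      · split <;> nlinarith [hp0 t, pt_le_one p hp0 hp1 t]
    have h2 : (F s)^2 ≤ 1 := by
      rw [← sq_abs]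
      nlinarith [abs_nonneg (F s)]
    nlinarith [hp0 s]
  calc ∑ y : Fin N → Y, w p y * (((cnt y t : ℝ)) - N * p t)^2
      = ∑ i : Fin N, ∑ j : Fin N, if i = j then V else 0 := by
        rw [expand]
        exact Finset.sum_congr rfl fun i _ => Finset.sum_congr rfl fun j _ => key i j
    _ = ∑ _i : Fin N, V := by
        exact Finset.sum_congr rfl fun i _ => by simp
    _ = N * V := by simp [mul_comm]
    _ ≤ N * 1 := by
        refine mul_le_mul_of_nonneg_left hV1 (by positivity)
    _ = N := mul_one _

/-! ### Chebyshev / typical set has large mass -/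

lemma mass_typ_ge (p : Y → ℝ) (hp0 : ∀ t, 0 ≤ p t) (hp1 : ∑ t, p t = 1)
    {δ : ℝ} (hδ : 0 < δ) {N : ℕ} (hN : 1 ≤ N) :
    1 - (Fintype.card Y : ℝ) / (N * δ^2) ≤ ∑ y ∈ typ p δ N, w p y := by
  classical
  haveI : Nonempty Y := nonempty_of_p p hp1
  have hN0 : (0:ℝ) < N := by exact_mod_cast hN
  set bad : Y → Finset (Fin N → Y) :=
    fun t => univ.filter fun y => ((N:ℝ)*δ)^2 ≤ (((cnt y t : ℝ)) - N * p t)^2 with hbad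
  have step1 : ∀ t, ∑ y ∈ bad t, w p y ≤ 1 / (N * δ^2) := by
    intro t
    have h1 : ∑ y ∈ bad t, w p y * ((N:ℝ)*δ)^2 ≤ ∑ y ∈ bad t, w p y * (((cnt y t : ℝ)) - N * p t)^2 := by
      refine Finset.sum_le_sum fun y hy => ?_
      rw [hbad, Finset.mem_filter] at hy
      exact mul_le_mul_of_nonneg_left hy.2 (w_nonneg hp0 y)
    have h2 : ∑ y ∈ bad t, w p y * (((cnt y t : ℝ)) - N * p t)^2
        ≤ ∑ y : Fin N → Y, w p y * (((cnt y t : ℝ)) - N * p t)^2 := by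
      refine Finset.sum_le_sum_of_subset_of_nonneg (Finset.subset_univ _) fun y _ _ => ?_
      exact mul_nonneg (w_nonneg hp0 y) (sq_nonneg _)
    have h3 := (h1.trans h2).trans (second_moment p hp0 hp1 N t)
    rw [← Finset.sum_mul] at h3
    rw [le_div_iff₀ (by positivity)]
    nlinarith [h3]
  have hsubset : ∀ y ∈ (univ \ typ p δ N : Finset (Fin N → Y)), ∃ t, y ∈ bad t := by
    intro y hy
    rw [Finset.mem_sdiff] at hy
    have : ¬ (∀ t, |((cnt y t : ℝ)) / N - p t| < δ) := fun h => hy.2 (mem_typ.mpr h)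
    push_neg at this
    obtain ⟨t, ht⟩ := this
    refine ⟨t, ?_⟩
    rw [hbad, Finset.mem_filter]
    refine ⟨mem_univ _, ?_⟩
    have habs : (N:ℝ)*δ ≤ |((cnt y t : ℝ)) - N * p t| := by
      have : ((cnt y t : ℝ)) - N * p t = N * (((cnt y t : ℝ))/N - p t) := by
        field_simp
      rw [this, abs_mul, abs_of_pos hN0]
      exact mul_le_mul_of_nonneg_left ht (le_of_lt hN0)
    calc ((N:ℝ)*δ)^2 ≤ |((cnt y t : ℝ)) - N * p t|^2 := by
          refine pow_le_pow_left₀ (by positivity) habs 2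
      _ = (((cnt y t : ℝ)) - N * p t)^2 := sq_abs _
  have step2 : ∑ y ∈ (univ \ typ p δ N : Finset (Fin N → Y)), w p y
      ≤ (Fintype.card Y : ℝ) / (N * δ^2) := by
    calc ∑ y ∈ (univ \ typ p δ N : Finset (Fin N → Y)), w p y
        ≤ ∑ t : Y, ∑ y ∈ bad t, w p y :=
          union_bound _ bad (w p) (w_nonneg hp0) hsubset
      _ ≤ ∑ _t : Y, 1 / ((N:ℝ) * δ^2) := Finset.sum_le_sum fun t _ => step1 t
      _ = (Fintype.card Y : ℝ) / (N * δ^2) := by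
          rw [Finset.sum_const, Finset.card_univ, nsmul_eq_mul]
          ring
  have hsplit : ∑ y ∈ (univ \ typ p δ N : Finset (Fin N → Y)), w p y + ∑ y ∈ typ p δ N, w p y = 1 := by
    rw [Finset.sum_sdiff (Finset.subset_univ _)]
    exact sum_w p hp1
  linarith [step2, hsplit]

/-! ### Entropy quantities -/

noncomputable def Sh (p : Y → ℝ) : ℝ := -∑ t, p t * Real.log (p t)
noncomputable def Cc (p : Y → ℝ) : ℝ := ∑ t ∈ univ.filter (fun t => 0 < p t), -Real.log (p t)
noncomputable def Uu (p : Y → ℝ) (δ : ℝ) : ℝ :=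
  -∑ t, (p t + δ) * Real.log ((p t + δ)/(1 + (Fintype.card Y : ℝ) * δ))

lemma Cc_nonneg (p : Y → ℝ) (hp0 : ∀ t, 0 ≤ p t) (hp1 : ∑ t, p t = 1) : 0 ≤ Cc p := by
  refine Finset.sum_nonneg fun t ht => ?_
  rw [Finset.mem_filter] at ht
  simp only [neg_nonneg]
  exact Real.log_nonpos (le_of_lt ht.2) (pt_le_one p hp0 hp1 t)

lemma w_le_exp (p : Y → ℝ) (hp0 : ∀ t, 0 ≤ p t) (hp1 : ∑ t, p t = 1)
    {δ : ℝ} (hδ : 0 < δ) {N : ℕ} (hN : 1 ≤ N) {y : Fin N → Y} (hy : y ∈ typ p δ N) :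
    w p y ≤ Real.exp (-(N:ℝ) * (Sh p - δ * Cc p)) := by
  classical
  have hN0 : (0:ℝ) < N := by exact_mod_cast hN
  rw [w_eq_prod_pow]
  by_cases hz : ∃ t, p t = 0 ∧ 0 < cnt y t
  · obtain ⟨t, ht0, htc⟩ := hz
    rw [Finset.prod_eq_zero (Finset.mem_univ t) (by rw [ht0]; exact zero_pow htc.ne')]
    exact le_of_lt (Real.exp_pos _)
  · push_neg at hz
    set pos := univ.filter (fun t => 0 < p t) with hposdef
    have hrestrict : ∏ t, p t ^ (cnt y t) = ∏ t ∈ pos, p t ^ (cnt y t) := by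
      refine (Finset.prod_subset (Finset.filter_subset _ _) fun t _ ht => ?_).symm
      simp only [hposdef, Finset.mem_filter, Finset.mem_univ, true_and, not_lt] at ht
      have hpt0 : p t = 0 := le_antisymm ht (hp0 t)
      have hcnt0 : cnt y t = 0 := Nat.le_zero.mp (hz t hpt0)
      rw [hpt0, hcnt0, pow_zero]
    rw [hrestrict]
    have hfac : ∀ t ∈ pos, p t ^ (cnt y t) ≤ p t ^ ((N:ℝ) * (p t - δ)) := by
      intro t ht
      rw [hposdef, Finset.mem_filter] at ht
      have h1 : p t ^ (cnt y t) = p t ^ ((cnt y t : ℝ)) := by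
        rw [Real.rpow_natCast]
      rw [h1]
      refine Real.rpow_le_rpow_of_exponent_ge ht.2 (pt_le_one p hp0 hp1 t) ?_
      have := (abs_lt.mp (mem_typ.mp hy t)).1
      have h2 : p t - δ < (cnt y t : ℝ) / N := by linarith
      calc (N:ℝ) * (p t - δ) ≤ N * ((cnt y t : ℝ)/N) :=
            mul_le_mul_of_nonneg_left (le_of_lt h2) (le_of_lt hN0)
        _ = (cnt y t : ℝ) := by field_simp
    calc ∏ t ∈ pos, p t ^ (cnt y t) ≤ ∏ t ∈ pos, p t ^ ((N:ℝ) * (p t - δ)) := by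
          refine Finset.prod_le_prod (fun t _ => pow_nonneg (hp0 t) _) hfac
      _ = ∏ t ∈ pos, Real.exp ((N:ℝ) * (p t - δ) * Real.log (p t)) := by
          refine Finset.prod_congr rfl fun t ht => ?_
          rw [hposdef, Finset.mem_filter] at ht
          rw [Real.rpow_def_of_pos ht.2, mul_comm (Real.log (p t))]
      _ = Real.exp (∑ t ∈ pos, (N:ℝ) * (p t - δ) * Real.log (p t)) := by
          rw [Real.exp_sum]
      _ = Real.exp (-(N:ℝ) * (Sh p - δ * Cc p)) := by
          congr 1
          have hS : Sh p = -∑ t ∈ pos, p t * Real.log (p t) := by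
            rw [Sh]
            congr 1
            refine (Finset.sum_subset (Finset.filter_subset _ _) fun t _ ht => ?_).symm
            simp only [hposdef, Finset.mem_filter, Finset.mem_univ, true_and, not_lt] at ht
            have : p t = 0 := le_antisymm ht (hp0 t)
            rw [this, zero_mul]
          rw [hS, Cc, ← hposdef]
          have e1 : -(N:ℝ) * (-∑ t ∈ pos, p t * Real.log (p t) - δ * ∑ t ∈ pos, -Real.log (p t))
              = ∑ t ∈ pos, ((N:ℝ) * (p t * Real.log (p t)) + (N:ℝ) * δ * (-Real.log (p t))) := by
            rw [Finset.sum_add_distrib, ← Finset.mul_sum, ← Finset.mul_sum]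
            ring
          rw [e1]
          exact Finset.sum_congr rfl fun t _ => by ring

lemma count_lower (p : Y → ℝ) (hp0 : ∀ t, 0 ≤ p t) (hp1 : ∑ t, p t = 1)
    {δ : ℝ} (hδ : 0 < δ) {N : ℕ} (hN : 1 ≤ N)
    (hN2 : (Fintype.card Y : ℝ) / (N * δ^2) ≤ 1/2) :
    1 ≤ (typ p δ N).card ∧
      (N:ℝ) * (Sh p - δ * Cc p) - Real.log 2 ≤ Real.log ((typ p δ N).card) := by
  have hmass := mass_typ_ge p hp0 hp1 hδ hN
  have h1 : (1:ℝ)/2 ≤ ∑ y ∈ typ p δ N, w p y := by linarith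
  have h2 : ∑ y ∈ typ p δ N, w p y
      ≤ ((typ p δ N).card : ℝ) * Real.exp (-(N:ℝ) * (Sh p - δ * Cc p)) := by
    calc ∑ y ∈ typ p δ N, w p y
        ≤ ∑ _y ∈ typ p δ N, Real.exp (-(N:ℝ) * (Sh p - δ * Cc p)) :=
          Finset.sum_le_sum fun y hy => w_le_exp p hp0 hp1 hδ hN hy
      _ = ((typ p δ N).card : ℝ) * Real.exp (-(N:ℝ) * (Sh p - δ * Cc p)) := by
          rw [Finset.sum_const, nsmul_eq_mul]
  have h3 : (1:ℝ)/2 * Real.exp ((N:ℝ) * (Sh p - δ * Cc p)) ≤ ((typ p δ N).card : ℝ) := by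
    have h4 := mul_le_mul_of_nonneg_right (h1.trans h2)
      (Real.exp_pos ((N:ℝ) * (Sh p - δ * Cc p))).le
    rw [mul_assoc, ← Real.exp_add, neg_mul, neg_add_cancel, Real.exp_zero, mul_one] at h4
    exact h4
  have hpos : (0:ℝ) < ((typ p δ N).card : ℝ) := lt_of_lt_of_le (by positivity) h3
  have hcard1 : 1 ≤ (typ p δ N).card := by exact_mod_cast Nat.pos_of_ne_zero (by
    intro h; rw [h] at hpos; simp at hpos)
  refine ⟨hcard1, ?_⟩
  have := Real.log_le_log (by positivity) h3
  rw [Real.log_mul (by norm_num) (Real.exp_ne_zero _), Real.log_exp] at this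
  have hlog : Real.log (1/2) = -Real.log 2 := by
    rw [one_div, Real.log_inv]
  linarith [this, hlog ▸ this]

/-! ### Upper bound on the count -/

lemma Uu_nonneg (p : Y → ℝ) (hp0 : ∀ t, 0 ≤ p t) (hp1 : ∑ t, p t = 1)
    {δ : ℝ} (hδ : 0 < δ) : 0 ≤ Uu p δ := by
  haveI : Nonempty Y := nonempty_of_p p hp1
  have hK : (1:ℝ) ≤ (Fintype.card Y : ℝ) := by
    exact_mod_cast Fintype.card_pos
  rw [Uu, neg_nonneg]
  refine Finset.sum_nonpos fun t _ => ?_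
  refine mul_nonpos_of_nonneg_of_nonpos (by linarith [hp0 t]) ?_
  refine Real.log_nonpos (div_nonneg (by linarith [hp0 t]) (by nlinarith)) ?_
  rw [div_le_one (by nlinarith)]
  nlinarith [pt_le_one p hp0 hp1 t]

lemma count_upper (p : Y → ℝ) (hp0 : ∀ t, 0 ≤ p t) (hp1 : ∑ t, p t = 1)
    {δ : ℝ} (hδ : 0 < δ) {N : ℕ} (hN : 1 ≤ N) :
    Real.log ((typ p δ N).card) ≤ (N:ℝ) * Uu p δ := by
  classical
  haveI : Nonempty Y := nonempty_of_p p hp1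
  have hN0 : (0:ℝ) < N := by exact_mod_cast hN
  have hK : (1:ℝ) ≤ (Fintype.card Y : ℝ) := by exact_mod_cast Fintype.card_pos
  have hKδ : (0:ℝ) < 1 + (Fintype.card Y : ℝ) * δ := by nlinarith
  set q : Y → ℝ := fun t => (p t + δ)/(1 + (Fintype.card Y : ℝ) * δ) with hqdef
  have hq0 : ∀ t, 0 < q t := fun t => div_pos (by linarith [hp0 t]) hKδ
  have hq1 : ∀ t, q t ≤ 1 := by
    intro t
    rw [hqdef, div_le_one hKδ]
    nlinarith [pt_le_one p hp0 hp1 t]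
  have hqsum : ∑ t, q t = 1 := by
    rw [hqdef, ← Finset.sum_div, Finset.sum_add_distrib, hp1, Finset.sum_const,
      Finset.card_univ, nsmul_eq_mul, div_self hKδ.ne']
  have hwq : ∀ y ∈ typ p δ N, Real.exp (-(N:ℝ) * Uu p δ) ≤ w q y := by
    intro y hy
    rw [w_eq_prod_pow]
    have hfac : ∀ t, q t ^ ((N:ℝ) * (p t + δ)) ≤ q t ^ (cnt y t) := by
      intro t
      rw [show q t ^ (cnt y t) = q t ^ ((cnt y t : ℝ)) from (Real.rpow_natCast _ _).symm]
      refine Real.rpow_le_rpow_of_exponent_ge (hq0 t) (hq1 t) ?_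
      have := (abs_lt.mp (mem_typ.mp hy t)).2
      have h2 : (cnt y t : ℝ) / N < p t + δ := by linarith
      calc (cnt y t : ℝ) = N * ((cnt y t : ℝ)/N) := by field_simp
        _ ≤ N * (p t + δ) := mul_le_mul_of_nonneg_left (le_of_lt h2) (le_of_lt hN0)
    calc Real.exp (-(N:ℝ) * Uu p δ)
        = ∏ t, q t ^ ((N:ℝ) * (p t + δ)) := by
          rw [Finset.prod_congr rfl fun t (_ : t ∈ univ) =>
            Real.rpow_def_of_pos (hq0 t) ((N:ℝ) * (p t + δ)), ← Real.exp_sum]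
          congr 1
          rw [Uu, mul_neg, neg_mul, neg_neg, Finset.mul_sum]
          exact Finset.sum_congr rfl fun t _ => by simp only [hqdef]; ring
      _ ≤ ∏ t, q t ^ (cnt y t) := by
          refine Finset.prod_le_prod (fun t _ => Real.rpow_nonneg (hq0 t).le _) fun t _ => hfac t
  have hcount : ((typ p δ N).card : ℝ) * Real.exp (-(N:ℝ) * Uu p δ) ≤ 1 := by
    calc ((typ p δ N).card : ℝ) * Real.exp (-(N:ℝ) * Uu p δ)
        = ∑ _y ∈ typ p δ N, Real.exp (-(N:ℝ) * Uu p δ) := by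
          rw [Finset.sum_const, nsmul_eq_mul]
      _ ≤ ∑ y ∈ typ p δ N, w q y := Finset.sum_le_sum hwq
      _ ≤ ∑ y : Fin N → Y, w q y :=
          Finset.sum_le_sum_of_subset_of_nonneg (Finset.subset_univ _)
            (fun y _ _ => w_nonneg (fun t => (hq0 t).le) y)
      _ = 1 := sum_w q hqsum
  rcases Nat.eq_zero_or_pos (typ p δ N).card with h0 | hpos
  · rw [h0]
    norm_num
    exact mul_nonneg hN0.le (Uu_nonneg p hp0 hp1 hδ)
  · have hc : ((typ p δ N).card : ℝ) ≤ Real.exp ((N:ℝ) * Uu p δ) := by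
      have h4 := mul_le_mul_of_nonneg_right hcount (Real.exp_pos ((N:ℝ) * Uu p δ)).le
      rw [mul_assoc, ← Real.exp_add, neg_mul, neg_add_cancel, Real.exp_zero, mul_one,
        one_mul] at h4
      exact h4
    calc Real.log ((typ p δ N).card) ≤ Real.log (Real.exp ((N:ℝ) * Uu p δ)) :=
          Real.log_le_log (by exact_mod_cast hpos) hc
      _ = (N:ℝ) * Uu p δ := Real.log_exp _

/-! ### Superadditivity -/

lemma cnt_append {M N : ℕ} (y : Fin M → Y) (z : Fin N → Y) (t : Y) :
    cnt (Fin.append y z) t = cnt y t + cnt z t := by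
  classical
  have h1 : ((cnt (Fin.append y z) t : ℕ)) = ∑ j : Fin (M + N), if Fin.append y z j = t then 1 else 0 := by
    rw [cnt, Finset.card_filter]
  rw [h1, Fin.sum_univ_add]
  simp only [Fin.append_left, Fin.append_right]
  rw [cnt, cnt, Finset.card_filter, Finset.card_filter]

lemma typ_superadd (p : Y → ℝ) {δ : ℝ} (hδ : 0 < δ) {M N : ℕ} (hM : 1 ≤ M) (hN : 1 ≤ N) :
    (typ p δ M).card * (typ p δ N).card ≤ (typ p δ (M + N)).card := by
  classical
  have hM0 : (0:ℝ) < M := by exact_mod_cast hM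
  have hN0 : (0:ℝ) < N := by exact_mod_cast hN
  have hMN0 : (0:ℝ) < M + N := by linarith
  have hmaps : ∀ x ∈ (typ p δ M) ×ˢ (typ p δ N),
      (Fin.append x.1 x.2 : Fin (M + N) → Y) ∈ typ p δ (M + N) := by
    rintro ⟨y, z⟩ hx
    rw [Finset.mem_product] at hx
    rw [mem_typ]
    intro t
    have hy := mem_typ.mp hx.1 t
    have hz := mem_typ.mp hx.2 t
    rw [cnt_append]
    have key : ((cnt y t + cnt z t : ℕ) : ℝ) / ((M + N : ℕ) : ℝ) - p t
        = (M / (M + N)) * ((cnt y t : ℝ)/M - p t) + (N / (M + N)) * ((cnt z t : ℝ)/N - p t) := by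
      push_cast
      field_simp
      ring
    rw [key]
    calc |(M / (M + N)) * ((cnt y t : ℝ)/M - p t) + (N / (M + N)) * ((cnt z t : ℝ)/N - p t)|
        ≤ |(M / (M + N)) * ((cnt y t : ℝ)/M - p t)| + |(N / (M + N)) * ((cnt z t : ℝ)/N - p t)| :=
          abs_add_le _ _
      _ = (M / (M + N)) * |(cnt y t : ℝ)/M - p t| + (N / (M + N)) * |(cnt z t : ℝ)/N - p t| := by
          rw [abs_mul, abs_mul, abs_of_pos (div_pos hM0 hMN0), abs_of_pos (div_pos hN0 hMN0)]
      _ < (M / (M + N)) * δ + (N / (M + N)) * δ := by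
          refine add_lt_add ?_ ?_
          · exact mul_lt_mul_of_pos_left hy (div_pos hM0 hMN0)
          · exact mul_lt_mul_of_pos_left hz (div_pos hN0 hMN0)
      _ = δ := by field_simp
  have hinj : Set.InjOn (fun x : (Fin M → Y) × (Fin N → Y) => Fin.append x.1 x.2)
      ((typ p δ M) ×ˢ (typ p δ N) : Finset _) := by
    rintro ⟨y, z⟩ _ ⟨y', z'⟩ _ h
    simp only at h
    have h1 : y = y' := by
      funext i
      have := congrFun h (Fin.castAdd N i)
      rwa [Fin.append_left, Fin.append_left] at this
    have h2 : z = z' := by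
      funext i
      have := congrFun h (Fin.natAdd M i)
      rwa [Fin.append_right, Fin.append_right] at this
    rw [h1, h2]
  calc (typ p δ M).card * (typ p δ N).card
      = ((typ p δ M) ×ˢ (typ p δ N)).card := (Finset.card_product _ _).symm
    _ = (((typ p δ M) ×ˢ (typ p δ N)).image
          (fun x : (Fin M → Y) × (Fin N → Y) => Fin.append x.1 x.2)).card :=
        (Finset.card_image_of_injOn hinj).symm
    _ ≤ (typ p δ (M + N)).card := by
        refine Finset.card_le_card ?_
        intro a ha
        rw [Finset.mem_image] at ha
        obtain ⟨x, hx, rfl⟩ := ha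
        exact hmaps x hx


/-! ### Assembly -/

lemma card_typ_eq (p : Y → ℝ) (δ : ℝ) (N : ℕ) :
    Nat.card {y : Fin N → Y // ∀ t : Y,
      |((Finset.univ.filter fun j => y j = t).card : ℝ) / N - p t| < δ}
      = (typ p δ N).card := by
  classical
  rw [Nat.card_eq_fintype_card, Fintype.card_subtype]
  congr 1
  ext y
  simp [mem_typ, cnt]

lemma Uu_tendsto (p : Y → ℝ) (hp0 : ∀ t, 0 ≤ p t) (hp1 : ∑ t, p t = 1) :
    Tendsto (Uu p) (nhdsWithin 0 (Set.Ioi 0)) (nhds (Sh p)) := by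
  haveI : Nonempty Y := nonempty_of_p p hp1
  set K : ℝ := (Fintype.card Y : ℝ) with hKdef
  have hK : (1:ℝ) ≤ K := by rw [hKdef]; exact_mod_cast Fintype.card_pos
  set F : ℝ → ℝ := fun x =>
    (-∑ t, (p t + x) * Real.log (p t + x)) + (1 + K*x) * Real.log (1 + K*x) with hFdef
  have hFc : Continuous F := by
    refine Continuous.add (Continuous.neg ?_) ?_
    · refine continuous_finset_sum _ fun t _ => ?_
      exact Real.continuous_mul_log.comp (continuous_const.add continuous_id)
    · exact Real.continuous_mul_log.comp (continuous_const.add (continuous_const.mul continuous_id))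
  have hF0 : F 0 = Sh p := by
    simp [hFdef, Sh, Real.log_one]
  have heq : ∀ δ ∈ Set.Ioi (0:ℝ), Uu p δ = F δ := by
    intro δ hδ
    rw [Set.mem_Ioi] at hδ
    have hKδ : (0:ℝ) < 1 + K * δ := by nlinarith
    have hlog : ∀ t : Y, Real.log ((p t + δ)/(1 + K * δ))
        = Real.log (p t + δ) - Real.log (1 + K * δ) := by
      intro t
      exact Real.log_div (by linarith [hp0 t]) hKδ.ne'
    rw [Uu, hFdef, ← hKdef]
    simp only [hlog, mul_sub]
    rw [Finset.sum_sub_distrib, ← Finset.sum_mul]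
    have hsum : ∑ t, (p t + δ) = 1 + K * δ := by
      rw [Finset.sum_add_distrib, hp1, Finset.sum_const, Finset.card_univ, nsmul_eq_mul,
        hKdef]
    rw [hsum]
    ring
  have hFt : Tendsto F (nhdsWithin 0 (Set.Ioi 0)) (nhds (Sh p)) := by
    rw [← hF0]
    exact (hFc.continuousAt.tendsto).mono_left nhdsWithin_le_nhds
  refine hFt.congr' ?_
  filter_upwards [self_mem_nhdsWithin] with δ hδ
  exact (heq δ hδ).symm

theorem stmt3' (p : Y → ℝ) (hp0 : ∀ t, 0 ≤ p t) (hp1 : ∑ t, p t = 1) :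
    ∃ L : ℝ → ℝ,
      (∀ δ : ℝ, 0 < δ →
        Tendsto
          (fun N : ℕ =>
            Real.log (Nat.card {y : Fin N → Y // ∀ t : Y,
              |((Finset.univ.filter fun j => y j = t).card : ℝ) / N - p t| < δ}) / N)
          atTop (nhds (L δ))) ∧
      Tendsto L (nhdsWithin 0 (Set.Ioi 0)) (nhds (-∑ t, p t * Real.log (p t))) := by
  classical
  haveI : Nonempty Y := nonempty_of_p p hp1
  set K : ℝ := (Fintype.card Y : ℝ) with hKdef
  have hK : (1:ℝ) ≤ K := by rw [hKdef]; exact_mod_cast Fintype.card_pos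
  set N₀ : ℝ → ℕ := fun δ => ⌈2 * K / δ^2⌉₊ + 1 with hN₀def
  have hN₀1 : ∀ δ, 1 ≤ N₀ δ := fun δ => Nat.le_add_left 1 _
  have hN₀prop : ∀ δ, 0 < δ → ∀ N : ℕ, N₀ δ ≤ N → K / (N * δ^2) ≤ 1/2 := by
    intro δ hδ N hN
    have hNreal : 2 * K / δ^2 ≤ (N:ℝ) := by
      refine le_trans (Nat.le_ceil _) ?_
      have : (N₀ δ : ℝ) ≤ N := by exact_mod_cast hN
      rw [hN₀def] at this
      push_cast at this
      linarith
    have hNpos : (0:ℝ) < (N:ℝ) := by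
      have : 1 ≤ N := le_trans (hN₀1 δ) hN
      exact_mod_cast this
    have hδ2 : (0:ℝ) < δ^2 := by positivity
    have h2 : 2*K ≤ (N:ℝ) * δ^2 := by
      have h3 := mul_le_mul_of_nonneg_right hNreal hδ2.le
      rw [div_mul_cancel₀ _ hδ2.ne'] at h3
      linarith
    rw [div_le_div_iff₀ (by positivity) (by norm_num)]
    nlinarith
  set a : ℝ → ℕ → ℝ := fun δ N => Real.log (((typ p δ N).card : ℝ)) / N with hadef
  set L : ℝ → ℝ := fun δ => sSup ((a δ) '' {N : ℕ | N₀ δ ≤ N}) with hLdef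
  have hNge1 : ∀ δ (N : ℕ), N₀ δ ≤ N → 1 ≤ N := fun δ N hN => le_trans (hN₀1 δ) hN
  have haUu : ∀ δ, 0 < δ → ∀ N : ℕ, N₀ δ ≤ N → a δ N ≤ Uu p δ := by
    intro δ hδ N hN
    have h1 : 1 ≤ N := hNge1 δ N hN
    have hN0 : (0:ℝ) < N := by exact_mod_cast h1
    rw [hadef]
    rw [div_le_iff₀ hN0]
    have := count_upper p hp0 hp1 hδ h1
    linarith [this]
  -- Part 1: inner limits
  refine ⟨L, fun δ hδ => ?_, ?_⟩
  · have hfun : (fun N : ℕ =>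
        Real.log (Nat.card {y : Fin N → Y // ∀ t : Y,
          |((Finset.univ.filter fun j => y j = t).card : ℝ) / N - p t| < δ}) / N)
        = fun N : ℕ => Real.log (((typ p δ N).card : ℝ)) / N := by
      funext N
      rw [card_typ_eq p δ N]
    rw [hfun]
    have := fekete (fun N => ((typ p δ N).card : ℝ)) (N₀ δ) (hN₀1 δ)
      (fun N hN => by
        show (1:ℝ) ≤ ((typ p δ N).card : ℝ)
        exact_mod_cast (count_lower p hp0 hp1 hδ (hNge1 δ N hN) (hN₀prop δ hδ N hN)).1)
      (fun M N hM hN => by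
        show ((typ p δ M).card : ℝ) * ((typ p δ N).card : ℝ) ≤ ((typ p δ (M+N)).card : ℝ)
        exact_mod_cast typ_superadd p hδ (hNge1 δ M hM) (hNge1 δ N hN))
      (Uu p δ)
      (fun N hN => haUu δ hδ N hN)
    exact this
  -- Part 2: outer limit
  · have hup : ∀ δ, 0 < δ → L δ ≤ Uu p δ := by
      intro δ hδ
      rw [hLdef]
      refine csSup_le ⟨a δ (N₀ δ), Set.mem_image_of_mem _ (Set.mem_setOf.mpr (le_refl _))⟩ ?_
      rintro x ⟨N, hN, rfl⟩
      exact haUu δ hδ N hN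
    have hlow : ∀ δ, 0 < δ → Sh p - δ * Cc p ≤ L δ := by
      intro δ hδ
      refine le_of_forall_pos_le_add ?_
      intro ε hε
      set N : ℕ := max (N₀ δ) (⌈Real.log 2 / ε⌉₊ + 1) with hNdef
      have hN₀N : N₀ δ ≤ N := le_max_left _ _
      have h1N : 1 ≤ N := hNge1 δ N hN₀N
      have hN0 : (0:ℝ) < N := by exact_mod_cast h1N
      have hlog2 : Real.log 2 / N ≤ ε := by
        have h2 : (⌈Real.log 2 / ε⌉₊ + 1 : ℕ) ≤ N := le_max_right _ _
        have h3 : Real.log 2 / ε ≤ (N:ℝ) := by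
          refine le_trans (Nat.le_ceil _) ?_
          have : ((⌈Real.log 2 / ε⌉₊ : ℕ) : ℝ) ≤ N := by exact_mod_cast le_trans (Nat.le_succ _) h2
          linarith
        rw [div_le_iff₀ hN0]
        have := (div_le_iff₀ hε).mp h3
        nlinarith
      have hcl := (count_lower p hp0 hp1 hδ h1N (hN₀prop δ hδ N hN₀N)).2
      have haN : Sh p - δ * Cc p - ε ≤ a δ N := by
        rw [hadef]
        rw [le_div_iff₀ hN0]
        have : ((N:ℝ)) * (Sh p - δ * Cc p) - Real.log 2 ≥ (Sh p - δ * Cc p - ε) * N := by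
          have := hlog2
          have h5 : Real.log 2 ≤ ε * N := by
            rw [div_le_iff₀ hN0] at hlog2
            linarith
          nlinarith
        linarith [hcl]
      have hmem : a δ N ≤ L δ := by
        rw [hLdef]
        refine le_csSup ⟨Uu p δ, ?_⟩ (Set.mem_image_of_mem _ (Set.mem_setOf.mpr hN₀N))
        rintro x ⟨M, hM, rfl⟩
        exact haUu δ hδ M hM
      linarith
    have t1 : Tendsto (fun δ => Sh p - δ * Cc p) (nhdsWithin 0 (Set.Ioi 0)) (nhds (Sh p)) := by
      have hc : Continuous (fun δ : ℝ => Sh p - δ * Cc p) := by continuity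
      have h6 : Tendsto (fun δ : ℝ => Sh p - δ * Cc p) (nhdsWithin 0 (Set.Ioi 0))
          (nhds (Sh p - 0 * Cc p)) :=
        (hc.continuousAt (x := 0)).tendsto.mono_left nhdsWithin_le_nhds
      simpa using h6
    have t2 : Tendsto (Uu p) (nhdsWithin 0 (Set.Ioi 0)) (nhds (Sh p)) :=
      Uu_tendsto p hp0 hp1
    have hSh : Sh p = -∑ t, p t * Real.log (p t) := rfl
    rw [← hSh]
    refine tendsto_of_tendsto_of_tendsto_of_le_of_le' t1 t2 ?_ ?_
    · filter_upwards [self_mem_nhdsWithin] with δ hδ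
      exact hlow δ (Set.mem_Ioi.mp hδ)
    · filter_upwards [self_mem_nhdsWithin] with δ hδ
      exact hup δ (Set.mem_Ioi.mp hδ)


end Stmt3Aux

open Filter

/-- Shannon entropy as an asymptotic count of `δ`-typical sequences:
`S(p) = lim_{δ→0+} lim_{N→∞} (1/N) log #Δ(p;N,δ)`. -/
theorem stmt3 {Y : Type*} [Fintype Y] [DecidableEq Y]
    (p : Y → ℝ) (hp0 : ∀ t, 0 ≤ p t) (hp1 : ∑ t, p t = 1) :
    ∃ L : ℝ → ℝ,
      (∀ δ : ℝ, 0 < δ →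
        Tendsto
          (fun N : ℕ =>
            Real.log (Nat.card {y : Fin N → Y // ∀ t : Y,
              |((Finset.univ.filter fun j => y j = t).card : ℝ) / N - p t| < δ}) / N)
          atTop (nhds (L δ))) ∧
      Tendsto L (nhdsWithin 0 (Set.Ioi 0)) (nhds (-∑ t, p t * Real.log (p t))) :=
  Stmt3Aux.stmt3' p hp0 hp1
end

section
/- Let X_1,...,X_n be random variables with values in a finite set X, with joint distribution p on X^n and marginals p_{X_i}. Define, for δ > 0 and N ∈ ℕ, Δ_sym(X_1,...,X_n;N,δ) ⊂ S_N^n as the set of (σ_1,...,σ_n) such that the joint empirical measure of (σ_1(x_1),...,σ_n(x_n)) is within δ of p (pointwise on X^n) for some sorted x_1,...,x_n ∈ X_≤^N. Then −lim_{δ→0+} limsup_{N→∞} (1/N) log γ_{S_N}^{⊗n}(Δ_sym(X_1,...,X_n;N,δ)) = −lim_{δ→0+} liminf_{N→∞} (same quantity) = −S(X_1,...,X_n) + ∑_{i=1}^n S(X_i), where S denotes Shannon entropy. -/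
open Finset Filter

/-- The discrete permutation micro-state set `Δ_sym(X₁,…,Xₙ;N,δ)`: tuples of
permutations `(σ₁,…,σₙ)` such that the joint empirical measure of
`(σ₁(x₁),…,σₙ(xₙ))` is within `δ` of the joint distribution `p` pointwise, for
some sorted sequences `xᵢ`. -/
def DeltaSymDiscrete (n d : ℕ) (p : (Fin n → Fin d) → ℝ) (N : ℕ) (δ : ℝ) :
    Set (Fin n → Equiv.Perm (Fin N)) :=
  {σ | ∃ x : Fin n → Fin N → Fin d, (∀ i, Monotone (x i)) ∧
    ∀ z : Fin n → Fin d,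
      |((Finset.univ.filter fun j : Fin N =>
          ∀ i, x i ((σ i)⁻¹ j) = z i).card : ℝ) / N - p z| < δ}

/-- `(1/N) log γ_{S_N}^{⊗n}(Δ_sym(X₁,…,Xₙ;N,δ))`. -/
noncomputable def symQDiscrete (n d : ℕ) (p : (Fin n → Fin d) → ℝ)
    (N : ℕ) (δ : ℝ) : ℝ :=
  Real.log ((Nat.card (DeltaSymDiscrete n d p N δ) : ℝ) /
    (N.factorial : ℝ) ^ n) / N

set_option linter.unusedSectionVars false
set_option maxHeartbeats 1000000
set_option linter.unusedTactic false
set_option linter.unusedVariables false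


set_option linter.unusedSectionVars false

namespace Stmt17Aux

variable {N : ℕ} {α : Type*} [Fintype α] [DecidableEq α]

/-- count of `a` in the sequence `f` -/
def cnt (f : Fin N → α) (a : α) : ℕ := (univ.filter fun j => f j = a).card

lemma cnt_comp_perm (f : Fin N → α) (π : Equiv.Perm (Fin N)) (a : α) :
    cnt (f ∘ π) a = cnt f a := by
  unfold cnt
  apply Finset.card_bij' (fun j _ => π j) (fun j _ => π.symm j)
  · intro j hj; simp only [mem_filter, mem_univ, true_and] at hj ⊢; exact hj
  · intro j hj; simp only [mem_filter, mem_univ, true_and, Function.comp_apply] at hj ⊢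
    simpa using hj
  · intro j _; simp
  · intro j _; simp

lemma sum_cnt (f : Fin N → α) : ∑ a, cnt f a = N := by
  unfold cnt
  rw [← Finset.card_eq_sum_card_fiberwise (f := f) (fun j _ => mem_univ (f j))]
  simp

lemma cnt_le (f : Fin N → α) (a : α) : cnt f a ≤ N := by
  simpa [cnt] using (Finset.card_filter_le univ (fun j => f j = a))

/-- fibers of the sigma projection -/
def fiberEquiv (k : α → ℕ) (a : α) : {s : Σ b, Fin (k b) // s.1 = a} ≃ Fin (k a) where
  toFun s := Fin.cast (congrArg k s.2) s.1.2
  invFun v := ⟨⟨a, v⟩, rfl⟩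
  left_inv := by rintro ⟨⟨b, v⟩, rfl⟩; rfl
  right_inv := fun v => rfl

lemma exists_cnt_eq (k : α → ℕ) (hk : ∑ a, k a = N) :
    ∃ w : Fin N → α, ∀ a, cnt w a = k a := by
  have hcard : Fintype.card (Σ b, Fin (k b)) = Fintype.card (Fin N) := by
    simp [Fintype.card_sigma, hk]
  let e : (Σ b, Fin (k b)) ≃ Fin N := Fintype.equivOfCardEq hcard
  refine ⟨fun j => (e.symm j).1, fun a => ?_⟩
  have : cnt (fun j => (e.symm j).1) a = Fintype.card {j : Fin N // (e.symm j).1 = a} := by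
    rw [Fintype.card_subtype]; rfl
  rw [this]
  exact (Fintype.card_congr ((e.symm.subtypeEquiv fun j => Iff.rfl).trans
    (fiberEquiv k a))).trans (Fintype.card_fin _)

lemma exists_perm_comp (f g : Fin N → α) (h : ∀ a, cnt f a = cnt g a) :
    ∃ π : Equiv.Perm (Fin N), f ∘ π = g := by
  have hc : ∀ a, Fintype.card {x : Fin N // g x = a} = Fintype.card {x : Fin N // f x = a} := by
    intro a
    rw [Fintype.card_subtype, Fintype.card_subtype]
    exact (h a).symm
  let ea : ∀ a, {x : Fin N // g x = a} ≃ {x : Fin N // f x = a} :=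
    fun a => Fintype.equivOfCardEq (hc a)
  refine ⟨((Equiv.sigmaFiberEquiv g).symm.trans
      ((Equiv.sigmaCongrRight ea).trans (Equiv.sigmaFiberEquiv f))), ?_⟩
  funext j
  simp only [Function.comp_apply, Equiv.trans_apply, Equiv.sigmaFiberEquiv,
    Equiv.sigmaCongrRight, Equiv.coe_fn_mk, Equiv.coe_fn_symm_mk]
  exact (ea (g j) ⟨j, rfl⟩).2

lemma card_comp_eq (f g : Fin N → α) (h : ∀ a, cnt f a = cnt g a) :
    (univ.filter fun π : Equiv.Perm (Fin N) => f ∘ π = g).card = ∏ a, (cnt f a).factorial := by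
  obtain ⟨π₀, hπ₀⟩ := exists_perm_comp f g h
  have hbij : (univ.filter fun π : Equiv.Perm (Fin N) => f ∘ π = g).card
      = (univ.filter fun π : Equiv.Perm (Fin N) => f ∘ π = f).card := by
    apply Finset.card_bij' (fun τ _ => τ * π₀⁻¹) (fun τ _ => τ * π₀)
    · intro τ hτ
      simp only [mem_filter, mem_univ, true_and] at hτ ⊢
      funext j
      have := congrFun hτ (π₀⁻¹ j)
      simp only [Function.comp_apply, Equiv.Perm.mul_apply] at this ⊢
      rw [this, ← hπ₀]; simp
    · intro τ hτ
      simp only [mem_filter, mem_univ, true_and] at hτ ⊢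
      funext j
      have := congrFun hτ (π₀ j)
      simp only [Function.comp_apply, Equiv.Perm.mul_apply] at this ⊢
      rw [this, ← hπ₀]; simp
    · intro τ _; simp [mul_assoc]
    · intro τ _; simp [mul_assoc]
  rw [hbij]
  have hl : (univ.filter fun π : Equiv.Perm (Fin N) => f ∘ π = f).card
      = Fintype.card {π : Equiv.Perm (Fin N) // f ∘ ⇑π = f} := (Fintype.card_subtype _).symm
  rw [hl, DomMulAct.stabilizer_card f]
  exact Finset.prod_congr rfl fun a _ => by rw [Fintype.card_subtype]; rfl

lemma card_type_mul (k : α → ℕ) (hk : ∑ a, k a = N) :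
    (univ.filter fun w : Fin N → α => ∀ a, cnt w a = k a).card * ∏ a, (k a).factorial = N.factorial := by
  obtain ⟨w₀, hw₀⟩ := exists_cnt_eq k hk
  have key : (univ : Finset (Equiv.Perm (Fin N))).card
      = ∑ w ∈ (univ.filter fun w : Fin N → α => ∀ a, cnt w a = k a),
        ((univ : Finset (Equiv.Perm (Fin N))).filter fun π : Equiv.Perm (Fin N) => w₀ ∘ ⇑π = w).card := by
    apply Finset.card_eq_sum_card_fiberwise
    intro π _
    simp only [Finset.mem_coe, mem_filter, mem_univ, true_and]
    intro a; rw [cnt_comp_perm, hw₀]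
  have hcard : (univ : Finset (Equiv.Perm (Fin N))).card = N.factorial := by
    simp [Fintype.card_perm]
  rw [hcard] at key
  rw [key, Finset.sum_congr rfl fun w hw => ?_, Finset.sum_const, smul_eq_mul, mul_comm]
  rw [card_comp_eq w₀ w (fun a => by simp only [mem_filter, mem_univ, true_and] at hw; rw [hw₀, hw a])]
  exact Finset.prod_congr rfl fun a _ => by rw [hw₀]

end Stmt17Aux


namespace Stmt17Aux2

lemma mul_log_ratio_le (m : ℕ) : (m:ℝ) * (Real.log (m+1) - Real.log m) ≤ 1 := by
  rcases Nat.eq_zero_or_pos m with h | h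
  · simp [h]
  have hm : (0:ℝ) < m := by exact_mod_cast h
  have : Real.log (m+1) - Real.log m = Real.log ((m+1)/m) := by
    rw [Real.log_div (by positivity) (ne_of_gt hm)]
  rw [this]
  have hlog : Real.log ((m+1)/m) ≤ (m+1)/m - 1 :=
    Real.log_le_sub_one_of_pos (by positivity)
  have : ((m:ℝ)+1)/m - 1 = 1/m := by field_simp; ring
  calc (m:ℝ) * Real.log ((m+1)/m) ≤ (m:ℝ) * ((m+1)/m - 1) := by
        exact mul_le_mul_of_nonneg_left hlog (le_of_lt hm)
    _ = 1 := by rw [this]; field_simp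

lemma one_le_mul_log_ratio (m : ℕ) :
    1 ≤ ((m:ℝ)+2) * (Real.log (m+2) - Real.log (m+1)) := by
  have h1 : (0:ℝ) < (m:ℝ)+1 := by positivity
  have h2 : (0:ℝ) < (m:ℝ)+2 := by positivity
  have hlog : Real.log (((m:ℝ)+1)/((m:ℝ)+2)) ≤ ((m:ℝ)+1)/((m:ℝ)+2) - 1 :=
    Real.log_le_sub_one_of_pos (by positivity)
  have heq : ((m:ℝ)+1)/((m:ℝ)+2) - 1 = -(1/((m:ℝ)+2)) := by
    rw [div_sub_one (by positivity)]
    push_cast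
    ring_nf
  have hlog2 : Real.log (((m:ℝ)+1)/((m:ℝ)+2)) ≤ -(1/((m:ℝ)+2)) := by linarith
  have hdiv : Real.log (((m:ℝ)+1)/((m:ℝ)+2)) = Real.log ((m:ℝ)+1) - Real.log ((m:ℝ)+2) :=
    Real.log_div (ne_of_gt h1) (ne_of_gt h2)
  have h3 : 1/((m:ℝ)+2) ≤ Real.log ((m:ℝ)+2) - Real.log ((m:ℝ)+1) := by linarith
  calc (1:ℝ) = ((m:ℝ)+2) * (1/((m:ℝ)+2)) := by field_simp
    _ ≤ ((m:ℝ)+2) * (Real.log (m+2) - Real.log (m+1)) :=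
        mul_le_mul_of_nonneg_left h3 (by positivity)

lemma log_factorial_lb (m : ℕ) : (m:ℝ) * Real.log m - m ≤ Real.log (m.factorial) := by
  induction m with
  | zero => simp
  | succ m ih =>
    have hfac : Real.log ((m+1).factorial) = Real.log (m.factorial) + Real.log (m+1) := by
      rw [Nat.factorial_succ, Nat.cast_mul, Real.log_mul (by positivity)
        (by exact_mod_cast Nat.factorial_pos m |>.ne')]
      push_cast; ring
    have key : (m:ℝ) * (Real.log (m+1) - Real.log m) ≤ 1 := mul_log_ratio_le m
    push_cast [hfac]
    nlinarith [ih]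

lemma log_factorial_ub (m : ℕ) :
    Real.log (m.factorial) ≤ ((m:ℝ)+1) * Real.log (m+1) - m := by
  induction m with
  | zero => simp
  | succ m ih =>
    have hfac : Real.log ((m+1).factorial) = Real.log (m.factorial) + Real.log (m+1) := by
      rw [Nat.factorial_succ, Nat.cast_mul, Real.log_mul (by positivity)
        (by exact_mod_cast Nat.factorial_pos m |>.ne')]
      push_cast; ring
    have key : 1 ≤ ((m:ℝ)+2) * (Real.log (m+2) - Real.log (m+1)) := one_le_mul_log_ratio m
    push_cast [hfac]
    rw [show ((m:ℝ)+1+1) = ((m:ℝ)+2) by ring]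
    nlinarith [ih, key]

/-- Stirling error term. -/
noncomputable def E (m : ℕ) : ℝ := Real.log m.factorial - ((m:ℝ) * Real.log m - m)

lemma E_nonneg (m : ℕ) : 0 ≤ E m := by
  have := log_factorial_lb m; unfold E; linarith

lemma E_le {m N : ℕ} (h : m ≤ N) : E m ≤ Real.log ((N:ℝ)+1) + 1 := by
  unfold E
  have h1 := log_factorial_ub m
  have h2 := mul_log_ratio_le m
  have h3 : Real.log ((m:ℝ)+1) ≤ Real.log ((N:ℝ)+1) := by
    apply Real.log_le_log (by positivity); exact_mod_cast by omega
  nlinarith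

lemma abs_E_le {m N : ℕ} (h : m ≤ N) : |E m| ≤ Real.log ((N:ℝ)+1) + 1 := by
  rw [abs_of_nonneg (E_nonneg m)]; exact E_le h

variable {α : Type*} [Fintype α]

/-- Key entropy estimate for log of multinomial-type quantities. -/
lemma log_factorial_sum_est (k : α → ℕ) (N : ℕ) (hN : 0 < N) (hk : ∑ a, k a = N) :
    |(Real.log N.factorial - ∑ a, Real.log (k a).factorial) -
      (N:ℝ) * (-∑ a, ((k a:ℝ)/N) * Real.log ((k a:ℝ)/N))|
      ≤ (1 + Fintype.card α) * (Real.log ((N:ℝ)+1) + 1) := by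
  have hNR : (0:ℝ) < N := by exact_mod_cast hN
  have hcast : ∑ a, ((k a:ℝ)) = (N:ℝ) := by exact_mod_cast hk
  have hkle : ∀ a, k a ≤ N := by
    intro a; rw [← hk]; exact Finset.single_le_sum (fun _ _ => Nat.zero_le _) (mem_univ a)
  have h1 : (N:ℝ) * (-∑ a, ((k a:ℝ)/N) * Real.log ((k a:ℝ)/N))
      = (N:ℝ) * Real.log N - ∑ a, (k a:ℝ) * Real.log (k a) := by
    have hpt : ∀ a ∈ (univ : Finset α), (N:ℝ) * (((k a:ℝ)/N) * Real.log ((k a:ℝ)/N))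
        = (k a:ℝ) * Real.log (k a) - (k a:ℝ) * Real.log N := by
      intro a _
      rcases Nat.eq_zero_or_pos (k a) with h | h
      · simp [h]
      have hka : (0:ℝ) < k a := by exact_mod_cast h
      rw [Real.log_div (ne_of_gt hka) (ne_of_gt hNR)]
      field_simp
    rw [mul_neg, Finset.mul_sum, Finset.sum_congr rfl hpt, Finset.sum_sub_distrib,
      ← Finset.sum_mul, hcast]
    ring
  rw [h1]
  have h2 : (Real.log N.factorial - ∑ a, Real.log (k a).factorial) -
      ((N:ℝ) * Real.log N - ∑ a, (k a:ℝ) * Real.log (k a)) = E N - ∑ a, E (k a) := by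
    unfold E
    rw [Finset.sum_sub_distrib, Finset.sum_sub_distrib, hcast]
    ring
  rw [h2]
  calc |E N - ∑ a, E (k a)| ≤ |E N| + |∑ a, E (k a)| := abs_sub _ _
    _ ≤ (Real.log ((N:ℝ)+1) + 1) + ∑ a, |E (k a)| := by
        gcongr
        · exact abs_E_le (le_refl N)
        · exact Finset.abs_sum_le_sum_abs _ _
    _ ≤ (Real.log ((N:ℝ)+1) + 1) + ∑ _a : α, (Real.log ((N:ℝ)+1) + 1) := by
        gcongr with a
        exact abs_E_le (hkle a)
    _ = (1 + Fintype.card α) * (Real.log ((N:ℝ)+1) + 1) := by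
        rw [Finset.sum_const, card_univ, nsmul_eq_mul]; ring
end Stmt17Aux2


namespace Stmt17Aux3

open Stmt17Aux

variable (n d N : ℕ)

def jointCount (y : Fin n → Fin N → Fin d) (z : Fin n → Fin d) : ℕ :=
  (univ.filter fun j => ∀ i, y i j = z i).card

def marg (k : (Fin n → Fin d) → ℕ) (i : Fin n) (t : Fin d) : ℕ :=
  ∑ z ∈ univ.filter (fun z : Fin n → Fin d => z i = t), k z

def Tk (k : (Fin n → Fin d) → ℕ) : Finset (Fin n → Fin N → Fin d) :=
  univ.filter fun y => ∀ z, jointCount n d N y z = k z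

lemma jointCount_eq_cnt (y : Fin n → Fin N → Fin d) (z : Fin n → Fin d) :
    jointCount n d N y z = cnt (fun j i => y i j) z := by
  unfold jointCount cnt
  congr 1
  ext j
  simp [funext_iff]

lemma sum_jointCount (y : Fin n → Fin N → Fin d) :
    ∑ z, jointCount n d N y z = N := by
  simp only [jointCount_eq_cnt]
  exact sum_cnt _

lemma jointCount_le (y : Fin n → Fin N → Fin d) (z : Fin n → Fin d) :
    jointCount n d N y z ≤ N := by
  rw [jointCount_eq_cnt]; exact cnt_le _ _

lemma cnt_marg (y : Fin n → Fin N → Fin d) (i : Fin n) (t : Fin d) :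
    cnt (y i) t = ∑ z ∈ univ.filter (fun z : Fin n → Fin d => z i = t),
      jointCount n d N y z := by
  unfold cnt
  rw [Finset.card_eq_sum_card_fiberwise
    (s := univ.filter fun j => y i j = t) (f := fun j => (fun i' => y i' j))
    (t := univ.filter fun z : Fin n → Fin d => z i = t)
    (by intro j hj; simp only [Finset.mem_coe, mem_filter, mem_univ, true_and] at hj ⊢; exact hj)]
  refine Finset.sum_congr rfl fun z hz => ?_
  simp only [mem_filter, mem_univ, true_and] at hz
  congr 1
  ext j
  simp only [mem_filter, mem_univ, true_and, funext_iff, jointCount]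
  constructor
  · rintro ⟨_, h2⟩; exact h2
  · intro h; exact ⟨(h i).trans hz, h⟩

lemma sum_marg (k : (Fin n → Fin d) → ℕ) (hk : ∑ z, k z = N) (i : Fin n) :
    ∑ t, marg n d k i t = N := by
  unfold marg
  rw [← hk]
  exact Finset.sum_fiberwise_of_maps_to (fun z _ => mem_univ (z i)) k

lemma Tk_card (k : (Fin n → Fin d) → ℕ) (hk : ∑ z, k z = N) :
    (Tk n d N k).card * ∏ z, (k z).factorial = N.factorial := by
  rw [← card_type_mul (N := N) k hk]
  congr 1
  apply Finset.card_bij' (fun y _ => fun j i => y i j) (fun w _ => fun i j => w j i)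
  · intro y hy
    simp only [Tk, mem_filter, mem_univ, true_and] at hy ⊢
    intro z; rw [← jointCount_eq_cnt]; exact hy z
  · intro w hw
    simp only [Tk, mem_filter, mem_univ, true_and] at hw ⊢
    intro z; rw [jointCount_eq_cnt]; exact hw z
  · intro y _; rfl
  · intro w _; rfl

lemma Tk_card_pos (k : (Fin n → Fin d) → ℕ) (hk : ∑ z, k z = N) :
    0 < (Tk n d N k).card := by
  rcases Nat.eq_zero_or_pos (Tk n d N k).card with h | h
  · exfalso
    have := Tk_card n d N k hk
    rw [h, zero_mul] at this
    exact (Nat.factorial_pos N).ne' this.symm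
  · exact h

end Stmt17Aux3

namespace Stmt17Aux3

open Stmt17Aux

variable (n d N : ℕ) (p : (Fin n → Fin d) → ℝ) (δ : ℝ)

noncomputable def Dfin : Finset (Fin n → Equiv.Perm (Fin N)) :=
  (Set.toFinite (DeltaSymDiscrete n d p N δ)).toFinset

lemma mem_Dfin (σ : Fin n → Equiv.Perm (Fin N)) :
    σ ∈ Dfin n d N p δ ↔ σ ∈ DeltaSymDiscrete n d p N δ :=
  Set.Finite.mem_toFinset _

lemma natcard_eq : Nat.card (DeltaSymDiscrete n d p N δ) = (Dfin n d N p δ).card := by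
  have h : DeltaSymDiscrete n d p N δ = ↑(Dfin n d N p δ) := by
    ext σ; simp [mem_Dfin]
  rw [h, Nat.card_coe_set_eq, Set.ncard_coe_finset]

lemma lower_card (k : (Fin n → Fin d) → ℕ) (hk : ∑ z, k z = N)
    (hδ : ∀ z, |(k z : ℝ)/N - p z| < δ) :
    (Tk n d N k).card * ∏ i, ∏ t, (marg n d k i t).factorial ≤ (Dfin n d N p δ).card := by
  have hsum : ∀ i, ∑ t, marg n d k i t = N := fun i => sum_marg n d N k hk i
  choose g hg using fun i => exists_cnt_eq (N := N) (marg n d k i) (hsum i)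
  set x : Fin n → Fin N → Fin d := fun i => g i ∘ Tuple.sort (g i) with hx
  have hxmono : ∀ i, Monotone (x i) := fun i => Tuple.monotone_sort (g i)
  have hxcnt : ∀ i t, cnt (x i) t = marg n d k i t := by
    intro i t
    show cnt (g i ∘ Tuple.sort (g i)) t = _
    rw [cnt_comp_perm]; exact hg i t
  set Φ : (Fin n → Equiv.Perm (Fin N)) → (Fin n → Fin N → Fin d) :=
    fun σ => fun i j => x i ((σ i)⁻¹ j) with hΦ
  set S' : Finset (Fin n → Equiv.Perm (Fin N)) :=
    univ.filter (fun σ => ∀ z, jointCount n d N (Φ σ) z = k z) with hS'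
  have hsub : S' ⊆ Dfin n d N p δ := by
    intro σ hσ
    rw [mem_Dfin]
    simp only [hS', mem_filter, mem_univ, true_and] at hσ
    refine ⟨x, hxmono, fun z => ?_⟩
    have hre : (univ.filter fun j : Fin N => ∀ i, x i ((σ i)⁻¹ j) = z i).card
        = jointCount n d N (Φ σ) z := rfl
    rw [hre, hσ z]
    exact hδ z
  have hfiber : ∀ y ∈ Tk n d N k, (S'.filter fun σ => Φ σ = y).card
      = ∏ i, ∏ t, (marg n d k i t).factorial := by
    intro y hy
    have hyt : ∀ z, jointCount n d N y z = k z := by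
      simpa [Tk] using hy
    have h1 : S'.filter (fun σ => Φ σ = y) = univ.filter (fun σ => Φ σ = y) := by
      ext σ
      simp only [hS', Finset.filter_filter, mem_filter, mem_univ, true_and]
      constructor
      · rintro ⟨_, h2⟩; exact h2
      · intro h; exact ⟨fun z => by rw [h]; exact hyt z, h⟩
    rw [h1]
    have h2 : (univ.filter (fun σ : Fin n → Equiv.Perm (Fin N) => Φ σ = y)).card
        = (univ.filter (fun τ : Fin n → Equiv.Perm (Fin N) => ∀ i, x i ∘ ⇑(τ i) = y i)).card := by
      apply Finset.card_bij' (fun σ _ => fun i => (σ i)⁻¹) (fun τ _ => fun i => (τ i)⁻¹)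
      case hi =>
        intro σ hσ
        simp only [mem_filter, mem_univ, true_and] at hσ ⊢
        intro i; funext j
        exact congrFun (congrFun hσ i) j
      case hj =>
        intro τ hτ
        simp only [mem_filter, mem_univ, true_and] at hτ ⊢
        funext i j
        simp only [hΦ, inv_inv]
        exact congrFun (hτ i) j
      case left_inv => intro σ _; funext i; simp
      case right_inv => intro τ _; funext i; simp
    rw [h2]
    have h3 : (univ.filter (fun τ : Fin n → Equiv.Perm (Fin N) => ∀ i, x i ∘ ⇑(τ i) = y i))
        = Fintype.piFinset (fun i => univ.filter (fun π : Equiv.Perm (Fin N) => x i ∘ ⇑π = y i)) := by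
      ext τ
      simp [Fintype.mem_piFinset]
    rw [h3, Fintype.card_piFinset]
    refine Finset.prod_congr rfl fun i _ => ?_
    have hcnts : ∀ a, cnt (x i) a = cnt (y i) a := by
      intro a
      rw [hxcnt i a, cnt_marg]
      unfold marg
      exact Finset.sum_congr rfl fun z _ => (hyt z).symm
    rw [card_comp_eq (x i) (y i) hcnts]
    exact Finset.prod_congr rfl fun t _ => by rw [hxcnt i t]
  have hcard : S'.card = (Tk n d N k).card * ∏ i, ∏ t, (marg n d k i t).factorial := by
    rw [Finset.card_eq_sum_card_fiberwise (f := Φ) (t := Tk n d N k)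
      (by intro σ hσ; simp only [hS', Finset.mem_coe, mem_filter, mem_univ, true_and] at hσ
          simp only [Tk, Finset.mem_coe, mem_filter, mem_univ, true_and]; exact hσ)]
    rw [Finset.sum_congr rfl hfiber, Finset.sum_const, smul_eq_mul]
  rw [← hcard]
  exact Finset.card_le_card hsub

end Stmt17Aux3

namespace Stmt17Aux3

open Stmt17Aux

variable (n d N : ℕ) (p : (Fin n → Fin d) → ℝ) (δ : ℝ)

noncomputable def Yd : Finset (Fin n → Fin N → Fin d) :=
  univ.filter (fun y => ∀ z, |(jointCount n d N y z : ℝ)/N - p z| < δ)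

noncomputable def Kd : Finset ((Fin n → Fin d) → ℕ) :=
  (Yd n d N p δ).image (fun y z => jointCount n d N y z)

lemma Kd_spec {k : (Fin n → Fin d) → ℕ} (hk : k ∈ Kd n d N p δ) :
    (∑ z, k z = N) ∧ (∀ z, |(k z : ℝ)/N - p z| < δ) ∧ (∀ z, k z ≤ N) := by
  simp only [Kd, Finset.mem_image] at hk
  obtain ⟨y, hy, rfl⟩ := hk
  simp only [Yd, mem_filter, mem_univ, true_and] at hy
  exact ⟨sum_jointCount n d N y, hy, fun z => jointCount_le n d N y z⟩

lemma Kd_card : (Kd n d N p δ).card ≤ (N+1) ^ (Fintype.card (Fin n → Fin d)) := by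
  have h : (Kd n d N p δ).card ≤ (univ : Finset ((Fin n → Fin d) → Fin (N+1))).card := by
    apply Finset.card_le_card_of_injOn (fun k z => Fin.ofNat (N+1) (k z))
    · intro k _; exact mem_univ _
    · intro k hk k' hk' h
      funext z
      have h1 := (Kd_spec n d N p δ hk).2.2 z
      have h2 := (Kd_spec n d N p δ hk').2.2 z
      have hz := congrFun h z
      beta_reduce at hz
      have hz' := congrArg Fin.val hz
      rwa [Fin.val_ofNat, Nat.mod_eq_of_lt (Nat.lt_succ_of_le h1),
        Fin.val_ofNat, Nat.mod_eq_of_lt (Nat.lt_succ_of_le h2)] at hz'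
  simpa using h

/-- The per-sequence sorting count bound. -/
lemma card_monotone_comp (y : Fin n → Fin N → Fin d) (i : Fin n) :
    (univ.filter (fun π : Equiv.Perm (Fin N) => Monotone (y i ∘ ⇑π))).card
      = ∏ t, (cnt (y i) t).factorial := by
  classical
  have h1 : (univ.filter (fun π : Equiv.Perm (Fin N) => Monotone (y i ∘ ⇑π)))
      = univ.filter (fun π : Equiv.Perm (Fin N) => y i ∘ ⇑π = y i ∘ ⇑(Tuple.sort (y i))) := by
    ext π
    simp only [mem_filter, mem_univ, true_and]
    exact (Tuple.comp_sort_eq_comp_iff_monotone).symm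
  rw [h1, card_comp_eq (y i) (y i ∘ ⇑(Tuple.sort (y i)))
    (fun a => (cnt_comp_perm (y i) (Tuple.sort (y i)) a).symm)]

lemma upper_card_step1 :
    (Dfin n d N p δ).card ≤ ∑ y ∈ Yd n d N p δ, ∏ i, ∏ t, (cnt (y i) t).factorial := by
  classical
  rcases Finset.eq_empty_or_nonempty (Dfin n d N p δ) with h | h
  · simp [h]
  obtain ⟨σ₀, hσ₀⟩ := h
  obtain ⟨x₀, _, _⟩ := (mem_Dfin n d N p δ σ₀).mp hσ₀
  set F : (Fin n → Equiv.Perm (Fin N)) → (Fin n → Fin N → Fin d) :=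
    fun σ => if h : σ ∈ DeltaSymDiscrete n d p N δ
      then (fun i j => h.choose i ((σ i)⁻¹ j)) else x₀ with hF
  have hmem : ∀ σ ∈ Dfin n d N p δ, F σ ∈ Yd n d N p δ := by
    intro σ hσ
    have h := (mem_Dfin n d N p δ σ).mp hσ
    simp only [Yd, mem_filter, mem_univ, true_and]
    intro z
    have hzz := h.choose_spec.2 z
    have : jointCount n d N (F σ) z
        = (univ.filter fun j : Fin N => ∀ i, h.choose i ((σ i)⁻¹ j) = z i).card := by
      unfold jointCount
      congr 1
      ext j
      simp only [hF, dif_pos h, mem_filter]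
    rw [this]
    exact hzz
  rw [Finset.card_eq_sum_card_fiberwise hmem]
  apply Finset.sum_le_sum
  intro y hy
  have hsub : (Dfin n d N p δ).filter (fun σ => F σ = y)
      ⊆ univ.filter (fun σ : Fin n → Equiv.Perm (Fin N) => ∀ i, Monotone (y i ∘ ⇑(σ i))) := by
    intro σ hσ
    simp only [mem_filter, mem_univ, true_and] at hσ ⊢
    obtain ⟨hσD, hFy⟩ := hσ
    have h := (mem_Dfin n d N p δ σ).mp hσD
    have hmono := h.choose_spec.1
    intro i
    have hyx : y i ∘ ⇑(σ i) = h.choose i := by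
      funext j
      have : y i = fun j => h.choose i ((σ i)⁻¹ j) := by
        rw [← hFy]; simp only [hF, dif_pos h]
      rw [this]
      simp only [Function.comp_apply, Equiv.Perm.inv_def, Equiv.symm_apply_apply]
    rw [hyx]
    exact hmono i
  calc ((Dfin n d N p δ).filter (fun σ => F σ = y)).card
      ≤ (univ.filter (fun σ : Fin n → Equiv.Perm (Fin N) => ∀ i, Monotone (y i ∘ ⇑(σ i)))).card :=
        Finset.card_le_card hsub
    _ = ∏ i, ∏ t, (cnt (y i) t).factorial := by
        have h3 : (univ.filter (fun σ : Fin n → Equiv.Perm (Fin N) => ∀ i, Monotone (y i ∘ ⇑(σ i))))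
            = Fintype.piFinset (fun i => univ.filter (fun π : Equiv.Perm (Fin N) => Monotone (y i ∘ ⇑π))) := by
          ext σ
          simp [Fintype.mem_piFinset]
        rw [h3, Fintype.card_piFinset]
        exact Finset.prod_congr rfl fun i _ => card_monotone_comp n d N y i

lemma upper_card :
    (Dfin n d N p δ).card ≤ ∑ k ∈ Kd n d N p δ,
      (Tk n d N k).card * ∏ i, ∏ t, (marg n d k i t).factorial := by
  classical
  refine le_trans (upper_card_step1 n d N p δ) ?_
  rw [← Finset.sum_fiberwise_of_maps_to (g := fun y (z : Fin n → Fin d) => jointCount n d N y z)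
    (t := Kd n d N p δ) (fun y hy => Finset.mem_image_of_mem _ hy)]
  apply Finset.sum_le_sum
  intro k hk
  have hterm : ∀ y ∈ (Yd n d N p δ).filter
      (fun y => (fun z => jointCount n d N y z) = k),
      ∏ i, ∏ t, (cnt (y i) t).factorial = ∏ i, ∏ t, (marg n d k i t).factorial := by
    intro y hy
    simp only [mem_filter] at hy
    refine Finset.prod_congr rfl fun i _ => Finset.prod_congr rfl fun t _ => ?_
    congr 1
    rw [cnt_marg]
    unfold marg
    exact Finset.sum_congr rfl fun z _ => congrFun hy.2 z
  rw [Finset.sum_congr rfl hterm, Finset.sum_const, smul_eq_mul]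
  apply Nat.mul_le_mul_right
  apply Finset.card_le_card
  intro y hy
  simp only [mem_filter, Tk, mem_univ, true_and] at hy ⊢
  exact fun z => congrFun hy.2 z

end Stmt17Aux3

namespace Stmt17Aux3

open Stmt17Aux Stmt17Aux2

variable (n d N : ℕ) (p : (Fin n → Fin d) → ℝ) (δ : ℝ)

/-- Shannon-type entropy functional. -/
noncomputable def Hq {β : Type*} [Fintype β] (q : β → ℝ) : ℝ := -∑ b, q b * Real.log (q b)

noncomputable def margR (q : (Fin n → Fin d) → ℝ) (i : Fin n) (t : Fin d) : ℝ :=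
  ∑ z ∈ univ.filter (fun z : Fin n → Fin d => z i = t), q z

/-- The rate functional `H(q) - ∑ᵢ H(qᵢ)`. -/
noncomputable def Fent (q : (Fin n → Fin d) → ℝ) : ℝ :=
  Hq q - ∑ i, Hq (fun t => margR n d q i t)

lemma continuous_Hq {β : Type*} [Fintype β] : Continuous (Hq (β := β)) := by
  apply Continuous.neg
  apply continuous_finset_sum
  intro b _
  exact Real.continuous_mul_log.comp (continuous_apply b)

lemma continuous_Fent : Continuous (Fent n d) := by
  apply Continuous.sub
  · exact continuous_Hq
  · apply continuous_finset_sum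
    intro i _
    apply continuous_Hq.comp
    apply continuous_pi
    intro t
    exact continuous_finset_sum _ (fun z _ => continuous_apply z)

noncomputable def c0 : ℝ := (1 + Fintype.card (Fin n → Fin d)) + n * (1 + d)

lemma c0_nonneg : 0 ≤ c0 n d := by unfold c0; positivity

lemma L1_nonneg (N : ℕ) : 0 ≤ Real.log ((N:ℝ)+1) + 1 := by
  have : (0:ℝ) ≤ Real.log ((N:ℝ)+1) := Real.log_nonneg (by push_cast; linarith [Nat.cast_nonneg (α := ℝ) N])
  linarith

lemma log_term_est (k : (Fin n → Fin d) → ℕ) (hN : 0 < N) (hk : ∑ z, k z = N) :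
    |Real.log (((Tk n d N k).card * ∏ i, ∏ t, (marg n d k i t).factorial : ℕ))
      - n * Real.log (N.factorial)
      - N * Fent n d (fun z => (k z : ℝ)/N)|
      ≤ c0 n d * (Real.log ((N:ℝ)+1) + 1) := by
  have hTpos : 0 < (Tk n d N k).card := Tk_card_pos n d N k hk
  have hTk := Tk_card n d N k hk
  -- logs of the combinatorial identity
  have hcast : ((Tk n d N k).card : ℝ) * ∏ z, ((k z).factorial : ℝ) = (N.factorial : ℝ) := by
    exact_mod_cast congrArg (Nat.cast (R := ℝ)) hTk
  have hprodpos : ∀ z : Fin n → Fin d, (0:ℝ) < ((k z).factorial : ℝ) := fun z => by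
    exact_mod_cast Nat.factorial_pos _
  have hlogT : Real.log ((Tk n d N k).card : ℝ)
      = Real.log (N.factorial) - ∑ z, Real.log ((k z).factorial : ℝ) := by
    have := congrArg Real.log hcast
    rw [Real.log_mul (by exact_mod_cast hTpos.ne') (by positivity),
      Real.log_prod (fun z _ => (hprodpos z).ne')] at this
    linarith
  have hlogFull : Real.log (((Tk n d N k).card * ∏ i, ∏ t, (marg n d k i t).factorial : ℕ))
      = Real.log ((Tk n d N k).card : ℝ)
        + ∑ i, ∑ t, Real.log ((marg n d k i t).factorial : ℝ) := by
    push_cast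
    rw [Real.log_mul (by exact_mod_cast hTpos.ne') (by positivity)]
    congr 1
    rw [Real.log_prod (fun i _ => by positivity)]
    exact Finset.sum_congr rfl fun i _ =>
      Real.log_prod (fun t _ => by exact_mod_cast (Nat.factorial_pos _).ne')
  -- the joint estimate
  have hJ := log_factorial_sum_est (α := Fin n → Fin d) k N hN hk
  -- marginal estimates
  have hM : ∀ i, |(Real.log N.factorial - ∑ t, Real.log ((marg n d k i t).factorial : ℝ))
      - (N:ℝ) * Hq (fun t => margR n d (fun z => (k z : ℝ)/N) i t)|
      ≤ (1 + (d:ℝ)) * (Real.log ((N:ℝ)+1) + 1) := by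
    intro i
    have := log_factorial_sum_est (α := Fin d) (marg n d k i) N hN (sum_marg n d N k hk i)
    have hmeq : ∀ t, ((marg n d k i t : ℝ))/N = margR n d (fun z => (k z : ℝ)/N) i t := by
      intro t
      unfold marg margR
      push_cast
      rw [Finset.sum_div]
    simp only [Fintype.card_fin] at this
    have hrw : (∑ t : Fin d, ((marg n d k i t : ℝ))/N * Real.log (((marg n d k i t : ℝ))/N))
        = ∑ t, margR n d (fun z => (k z:ℝ)/N) i t
            * Real.log (margR n d (fun z => (k z:ℝ)/N) i t) :=
      Finset.sum_congr rfl fun t _ => by rw [hmeq t]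
    unfold Hq
    rw [← hrw]
    exact this
  -- assemble
  have key : Real.log (((Tk n d N k).card * ∏ i, ∏ t, (marg n d k i t).factorial : ℕ))
      - n * Real.log (N.factorial) - N * Fent n d (fun z => (k z : ℝ)/N)
      = ((Real.log N.factorial - ∑ z, Real.log ((k z).factorial : ℝ))
          - (N:ℝ) * Hq (fun z => (k z : ℝ)/N))
        - ∑ i, ((Real.log N.factorial - ∑ t, Real.log ((marg n d k i t).factorial : ℝ))
          - (N:ℝ) * Hq (fun t => margR n d (fun z => (k z : ℝ)/N) i t)) := by
    have e1 : ∑ i : Fin n, ((Real.log N.factorial - ∑ t, Real.log ((marg n d k i t).factorial : ℝ))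
        - (N:ℝ) * Hq (fun t => margR n d (fun z => (k z : ℝ)/N) i t))
        = ((n:ℝ) * Real.log N.factorial - ∑ i, ∑ t, Real.log ((marg n d k i t).factorial : ℝ))
          - (N:ℝ) * ∑ i, Hq (fun t => margR n d (fun z => (k z : ℝ)/N) i t) := by
      rw [Finset.sum_sub_distrib, Finset.sum_sub_distrib, ← Finset.mul_sum, Finset.sum_const,
        card_univ, Fintype.card_fin, nsmul_eq_mul]
    rw [hlogFull, hlogT]
    unfold Fent
    rw [e1]
    ring
  rw [key]
  have habs : ∀ i : Fin n, |(Real.log N.factorial - ∑ t, Real.log ((marg n d k i t).factorial : ℝ))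
      - (N:ℝ) * Hq (fun t => margR n d (fun z => (k z : ℝ)/N) i t)|
      ≤ (1 + (d:ℝ)) * (Real.log ((N:ℝ)+1) + 1) := hM
  calc |_ - ∑ i, _| ≤ |(Real.log N.factorial - ∑ z, Real.log ((k z).factorial : ℝ))
          - (N:ℝ) * Hq (fun z => (k z : ℝ)/N)|
        + |∑ i, ((Real.log N.factorial - ∑ t, Real.log ((marg n d k i t).factorial : ℝ))
          - (N:ℝ) * Hq (fun t => margR n d (fun z => (k z : ℝ)/N) i t))| := abs_sub _ _
    _ ≤ (1 + (Fintype.card (Fin n → Fin d) : ℝ)) * (Real.log ((N:ℝ)+1) + 1)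
        + ∑ i : Fin n, (1 + (d:ℝ)) * (Real.log ((N:ℝ)+1) + 1) := by
        gcongr
        · unfold Hq
          exact hJ
        · exact le_trans (Finset.abs_sum_le_sum_abs _ _) (Finset.sum_le_sum fun i _ => habs i)
    _ = c0 n d * (Real.log ((N:ℝ)+1) + 1) := by
        rw [Finset.sum_const, card_univ, Fintype.card_fin, nsmul_eq_mul]
        unfold c0
        ring

end Stmt17Aux3

namespace Stmt17Aux3

open Stmt17Aux Stmt17Aux2

variable (n d N : ℕ) (p : (Fin n → Fin d) → ℝ) (δ : ℝ)

lemma symQ_eq : symQDiscrete n d p N δ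
    = Real.log (((Dfin n d N p δ).card : ℝ) / (N.factorial : ℝ) ^ n) / N := by
  unfold symQDiscrete
  rw [natcard_eq]

lemma symQ_nonpos : symQDiscrete n d p N δ ≤ 0 := by
  rw [symQ_eq]
  apply div_nonpos_of_nonpos_of_nonneg _ (Nat.cast_nonneg N)
  apply Real.log_nonpos
  · positivity
  · rw [div_le_one (by positivity)]
    have h1 : (Dfin n d N p δ).card ≤ N.factorial ^ n := by
      calc (Dfin n d N p δ).card ≤ (univ : Finset (Fin n → Equiv.Perm (Fin N))).card :=
            Finset.card_le_card (Finset.subset_univ _)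
        _ = N.factorial ^ n := by
            rw [Finset.card_univ, Fintype.card_pi]
            simp [Fintype.card_perm]
    exact_mod_cast h1

lemma symQ_lower (hN : 0 < N) (k : (Fin n → Fin d) → ℕ) (hk : ∑ z, k z = N)
    (hδ : ∀ z, |(k z : ℝ)/N - p z| < δ) :
    Fent n d (fun z => (k z : ℝ)/N) - c0 n d * (Real.log ((N:ℝ)+1) + 1) / N
      ≤ symQDiscrete n d p N δ := by
  have hNR : (0:ℝ) < N := by exact_mod_cast hN
  set T : ℕ := (Tk n d N k).card * ∏ i, ∏ t, (marg n d k i t).factorial with hT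
  have hTpos : 0 < T := by
    apply Nat.mul_pos (Tk_card_pos n d N k hk)
    exact Finset.prod_pos fun i _ => Finset.prod_pos fun t _ => Nat.factorial_pos _
  have hle : T ≤ (Dfin n d N p δ).card := lower_card n d N p δ k hk hδ
  rw [symQ_eq]
  have hlog : Real.log ((T : ℝ) / (N.factorial : ℝ) ^ n)
      ≤ Real.log (((Dfin n d N p δ).card : ℝ) / (N.factorial : ℝ) ^ n) := by
    apply Real.log_le_log (by positivity)
    have hle' : (T:ℝ) ≤ ((Dfin n d N p δ).card : ℝ) := by exact_mod_cast hle
    gcongr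
  have hlog2 : Real.log ((T : ℝ) / (N.factorial : ℝ) ^ n)
      = Real.log (T : ℝ) - n * Real.log (N.factorial) := by
    rw [Real.log_div (by exact_mod_cast hTpos.ne') (by positivity), Real.log_pow]
  have hest := log_term_est n d N k hN hk
  rw [← hT] at hest
  have h3 : (N:ℝ) * Fent n d (fun z => (k z : ℝ)/N) - c0 n d * (Real.log ((N:ℝ)+1) + 1)
      ≤ Real.log (T : ℝ) - n * Real.log (N.factorial) := by
    have h4 := (abs_le.mp hest).1
    linarith
  rw [le_div_iff₀ hNR]
  have hexp : (Fent n d (fun z => (k z : ℝ)/N)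
      - c0 n d * (Real.log ((N:ℝ)+1) + 1) / N) * N
      = (N:ℝ) * Fent n d (fun z => (k z : ℝ)/N)
        - c0 n d * (Real.log ((N:ℝ)+1) + 1) := by
    field_simp
  rw [hexp]
  linarith

lemma symQ_upper (hN : 0 < N) (hpos : 0 < (Dfin n d N p δ).card) (B : ℝ)
    (hB : ∀ k : (Fin n → Fin d) → ℕ, (∑ z, k z = N) → (∀ z, |(k z : ℝ)/N - p z| < δ) →
      Fent n d (fun z => (k z : ℝ)/N) ≤ B) :
    symQDiscrete n d p N δ
      ≤ B + ((Fintype.card (Fin n → Fin d)) * Real.log ((N:ℝ)+1)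
          + c0 n d * (Real.log ((N:ℝ)+1) + 1)) / N := by
  have hNR : (0:ℝ) < N := by exact_mod_cast hN
  -- termwise bound
  have hterm : ∀ k ∈ Kd n d N p δ,
      (((Tk n d N k).card * ∏ i, ∏ t, (marg n d k i t).factorial : ℕ) : ℝ)
        ≤ (N.factorial : ℝ) ^ n
          * Real.exp ((N:ℝ) * B + c0 n d * (Real.log ((N:ℝ)+1) + 1)) := by
    intro k hk
    obtain ⟨hks, hkδ, _⟩ := Kd_spec n d N p δ hk
    set T : ℕ := (Tk n d N k).card * ∏ i, ∏ t, (marg n d k i t).factorial with hT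
    have hTpos : 0 < T := by
      apply Nat.mul_pos (Tk_card_pos n d N k hks)
      exact Finset.prod_pos fun i _ => Finset.prod_pos fun t _ => Nat.factorial_pos _
    have hest := log_term_est n d N k hN hks
    rw [← hT] at hest
    have h4 := (abs_le.mp hest).2
    have hFB : Fent n d (fun z => (k z : ℝ)/N) ≤ B := hB k hks hkδ
    have hlogle : Real.log (T : ℝ)
        ≤ n * Real.log (N.factorial) + (N:ℝ) * B + c0 n d * (Real.log ((N:ℝ)+1) + 1) := by
      nlinarith [hNR]
    calc (T:ℝ) = Real.exp (Real.log (T:ℝ)) := (Real.exp_log (by exact_mod_cast hTpos)).symm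
      _ ≤ Real.exp (n * Real.log (N.factorial) + ((N:ℝ) * B
            + c0 n d * (Real.log ((N:ℝ)+1) + 1))) := by
          apply Real.exp_le_exp.mpr
          linarith
      _ = (N.factorial : ℝ) ^ n
            * Real.exp ((N:ℝ) * B + c0 n d * (Real.log ((N:ℝ)+1) + 1)) := by
          rw [Real.exp_add, Real.exp_nat_mul, Real.exp_log (by exact_mod_cast N.factorial_pos)]
  -- sum bound
  have hsum : ((Dfin n d N p δ).card : ℝ)
      ≤ ((N:ℝ)+1) ^ (Fintype.card (Fin n → Fin d)) * ((N.factorial : ℝ) ^ n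
          * Real.exp ((N:ℝ) * B + c0 n d * (Real.log ((N:ℝ)+1) + 1))) := by
    have h1 : ((Dfin n d N p δ).card : ℝ)
        ≤ ∑ k ∈ Kd n d N p δ,
          (((Tk n d N k).card * ∏ i, ∏ t, (marg n d k i t).factorial : ℕ) : ℝ) := by
      exact_mod_cast upper_card n d N p δ
    calc ((Dfin n d N p δ).card : ℝ) ≤ _ := h1
      _ ≤ ∑ _k ∈ Kd n d N p δ, ((N.factorial : ℝ) ^ n
            * Real.exp ((N:ℝ) * B + c0 n d * (Real.log ((N:ℝ)+1) + 1))) :=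
          Finset.sum_le_sum hterm
      _ = (Kd n d N p δ).card * ((N.factorial : ℝ) ^ n
            * Real.exp ((N:ℝ) * B + c0 n d * (Real.log ((N:ℝ)+1) + 1))) := by
          rw [Finset.sum_const, nsmul_eq_mul]
      _ ≤ ((N:ℝ)+1) ^ (Fintype.card (Fin n → Fin d)) * ((N.factorial : ℝ) ^ n
            * Real.exp ((N:ℝ) * B + c0 n d * (Real.log ((N:ℝ)+1) + 1))) := by
          apply mul_le_mul_of_nonneg_right _ (by positivity)
          have := Kd_card n d N p δ
          calc ((Kd n d N p δ).card : ℝ) ≤ ((N+1 : ℕ) : ℝ) ^ (Fintype.card (Fin n → Fin d)) := by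
                exact_mod_cast this
            _ = ((N:ℝ)+1) ^ (Fintype.card (Fin n → Fin d)) := by push_cast; ring
  rw [symQ_eq, div_le_iff₀ hNR]
  have hexp2 : (B + ((Fintype.card (Fin n → Fin d)) * Real.log ((N:ℝ)+1)
      + c0 n d * (Real.log ((N:ℝ)+1) + 1)) / N) * N
      = (N:ℝ) * B + ((Fintype.card (Fin n → Fin d)) * Real.log ((N:ℝ)+1)
        + c0 n d * (Real.log ((N:ℝ)+1) + 1)) := by
    field_simp
  rw [hexp2]
  have hlogD : Real.log (((Dfin n d N p δ).card : ℝ) / (N.factorial : ℝ) ^ n)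
      ≤ Real.log (((N:ℝ)+1) ^ (Fintype.card (Fin n → Fin d))
        * Real.exp ((N:ℝ) * B + c0 n d * (Real.log ((N:ℝ)+1) + 1))) := by
    apply Real.log_le_log (by positivity)
    rw [div_le_iff₀ (by positivity)]
    calc ((Dfin n d N p δ).card : ℝ) ≤ _ := hsum
      _ = ((N:ℝ)+1) ^ (Fintype.card (Fin n → Fin d))
          * Real.exp ((N:ℝ) * B + c0 n d * (Real.log ((N:ℝ)+1) + 1))
          * (N.factorial : ℝ) ^ n := by ring
  have hlogR : Real.log (((N:ℝ)+1) ^ (Fintype.card (Fin n → Fin d))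
      * Real.exp ((N:ℝ) * B + c0 n d * (Real.log ((N:ℝ)+1) + 1)))
      = (Fintype.card (Fin n → Fin d)) * Real.log ((N:ℝ)+1)
        + ((N:ℝ) * B + c0 n d * (Real.log ((N:ℝ)+1) + 1)) := by
    rw [Real.log_mul (by positivity) (by positivity), Real.log_pow, Real.log_exp]
  rw [hlogR] at hlogD
  linarith

end Stmt17Aux3

namespace Stmt17Aux3

open Stmt17Aux Stmt17Aux2 Asymptotics

variable (n d : ℕ) (p : (Fin n → Fin d) → ℝ)

lemma tendsto_logdiv : Tendsto (fun N : ℕ => (Real.log ((N:ℝ)+1) + 1)/N) atTop (nhds 0) := by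
  have ha : (fun x : ℝ => Real.log (x+1)) =o[atTop] (fun x : ℝ => x + 1) :=
    Real.isLittleO_log_id_atTop.comp_tendsto (tendsto_atTop_add_const_right _ 1 tendsto_id)
  have hb : (fun x : ℝ => x + 1) =O[atTop] (fun x : ℝ => x) := by
    apply Asymptotics.IsBigO.of_bound 2
    filter_upwards [eventually_ge_atTop (1:ℝ)] with x hx
    rw [Real.norm_eq_abs, Real.norm_eq_abs, abs_of_nonneg (by linarith),
      abs_of_nonneg (by linarith)]
    linarith
  have hc : (fun _ : ℝ => (1:ℝ)) =o[atTop] (fun x : ℝ => x) := by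
    simpa using Asymptotics.isLittleO_const_id_atTop (1:ℝ)
  have h1 : (fun x : ℝ => Real.log (x+1) + 1) =o[atTop] (fun x : ℝ => x) :=
    (ha.trans_isBigO hb).add hc
  have h2 : (fun N : ℕ => Real.log ((N:ℝ)+1) + 1) =o[atTop] (fun N : ℕ => (N:ℝ)) :=
    h1.comp_tendsto tendsto_natCast_atTop_atTop
  exact h2.tendsto_div_nhds_zero

lemma nonempty_Z (hp1 : ∑ z, p z = 1) : Nonempty (Fin n → Fin d) := by
  by_contra h
  rw [not_nonempty_iff] at h
  rw [Finset.univ_eq_empty, Finset.sum_empty] at hp1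
  exact one_ne_zero hp1.symm

lemma exists_kN (hp0 : ∀ z, 0 ≤ p z) (hp1 : ∑ z, p z = 1) (N : ℕ) (hN : 0 < N) :
    ∃ k : (Fin n → Fin d) → ℕ, (∑ z, k z = N) ∧
      ∀ z, |(k z : ℝ)/N - p z| ≤ (Fintype.card (Fin n → Fin d) : ℝ)/N := by
  have hZ : Nonempty (Fin n → Fin d) := nonempty_Z n d p hp1
  have hNR : (0:ℝ) < N := by exact_mod_cast hN
  obtain ⟨z₀⟩ := hZ
  set m : (Fin n → Fin d) → ℕ := fun z => ⌊(N:ℝ) * p z⌋₊ with hm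
  have hml : ∀ z, (m z : ℝ) ≤ (N:ℝ) * p z := fun z => Nat.floor_le (mul_nonneg (Nat.cast_nonneg N) (hp0 z))
  have hmu : ∀ z, (N:ℝ) * p z < (m z : ℝ) + 1 := fun z => Nat.lt_floor_add_one _
  set S : ℕ := ∑ z' ∈ univ.erase z₀, m z' with hS
  have hperase : ∑ z' ∈ univ.erase z₀, p z' = 1 - p z₀ := by
    have := Finset.add_sum_erase univ p (mem_univ z₀)
    linarith [hp1, this]
  have hSle : (S:ℝ) ≤ (N:ℝ) * (1 - p z₀) := by
    rw [hS]
    push_cast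
    calc ∑ z' ∈ univ.erase z₀, (m z' : ℝ) ≤ ∑ z' ∈ univ.erase z₀, (N:ℝ) * p z' :=
          Finset.sum_le_sum fun z' _ => hml z'
      _ = (N:ℝ) * (1 - p z₀) := by rw [← Finset.mul_sum, hperase]
  have hSleN : S ≤ N := by
    have h1 : (S:ℝ) ≤ (N:ℝ) := by nlinarith [hp0 z₀]
    exact_mod_cast h1
  have hcard1 : 1 ≤ Fintype.card (Fin n → Fin d) := @Fintype.card_pos _ _ ⟨z₀⟩
  have hcardR : (1:ℝ) ≤ (Fintype.card (Fin n → Fin d) : ℝ) := by exact_mod_cast hcard1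
  have herase : ((univ.erase z₀).card : ℝ) ≤ (Fintype.card (Fin n → Fin d) : ℝ) := by
    exact_mod_cast Finset.card_le_card (Finset.erase_subset _ _) |>.trans
      (le_of_eq (Finset.card_univ))
  refine ⟨fun z => if z = z₀ then N - S else m z, ?_, ?_⟩
  · rw [← Finset.add_sum_erase univ _ (mem_univ z₀)]
    rw [if_pos rfl]
    rw [Finset.sum_congr rfl (fun z hz => if_neg (Finset.ne_of_mem_erase hz)), ← hS]
    omega
  · intro z
    by_cases hz : z = z₀
    · subst hz
      simp only [eq_self_iff_true, if_true]
      rw [Nat.cast_sub hSleN]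
      have key0 : 0 ≤ (N:ℝ) - S - N * p z := by nlinarith [hSle]
      have key1 : (N:ℝ) - S - N * p z ≤ (Fintype.card (Fin n → Fin d) : ℝ) := by
        have h5 : (N:ℝ) * (1 - p z) = ∑ z' ∈ univ.erase z, (N:ℝ) * p z' := by
          rw [← Finset.mul_sum, hperase]
        have h6 : ∑ z' ∈ univ.erase z, (N:ℝ) * p z' ≤ ∑ z' ∈ univ.erase z, ((m z' : ℝ) + 1) :=
          Finset.sum_le_sum fun z' _ => le_of_lt (hmu z')
        have h7 : ∑ z' ∈ univ.erase z, ((m z' : ℝ) + 1) = (S:ℝ) + (univ.erase z).card := by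
          rw [Finset.sum_add_distrib, Finset.sum_const, nsmul_eq_mul, mul_one, hS]
          push_cast
          ring
        nlinarith [herase]
      have heq : ((N:ℝ) - S)/N - p z = ((N:ℝ) - S - N * p z)/N := by
        field_simp
      rw [heq, abs_div, abs_of_pos hNR, abs_of_nonneg key0]
      gcongr
    · simp only
      rw [if_neg hz]
      have key0 : -1 ≤ (m z:ℝ) - N * p z := by linarith [hmu z]
      have key1 : (m z:ℝ) - N * p z ≤ 0 := by linarith [hml z]
      have heq : (m z:ℝ)/N - p z = ((m z:ℝ) - N * p z)/N := by
        field_simp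
      rw [heq, abs_div, abs_of_pos hNR]
      gcongr
      rw [abs_le]
      constructor
      · linarith
      · linarith

end Stmt17Aux3

namespace Stmt17Aux3

open Stmt17Aux Stmt17Aux2

variable (n d : ℕ) (p : (Fin n → Fin d) → ℝ)

lemma eventually_lower (hp0 : ∀ z, 0 ≤ p z) (hp1 : ∑ z, p z = 1)
    {δ ε : ℝ} (hδ : 0 < δ) (hε : 0 < ε) :
    ∀ᶠ N : ℕ in atTop, (Fent n d p - ε ≤ symQDiscrete n d p N δ
      ∧ 0 < (Dfin n d N p δ).card) := by
  obtain ⟨δ₁, hδ₁pos, hδ₁⟩ := Metric.continuousAt_iff.mp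
    ((continuous_Fent n d).continuousAt (x := p)) (ε/2) (half_pos hε)
  have hmin : 0 < min δ δ₁ := lt_min hδ hδ₁pos
  have hD : Tendsto (fun N : ℕ => (Fintype.card (Fin n → Fin d) : ℝ)/N) atTop (nhds 0) :=
    tendsto_const_div_atTop_nhds_zero_nat _
  have h1 : ∀ᶠ N : ℕ in atTop, (Fintype.card (Fin n → Fin d) : ℝ)/N < min δ δ₁ :=
    hD.eventually_lt_const hmin
  have hc0 : Tendsto (fun N : ℕ => c0 n d * ((Real.log ((N:ℝ)+1) + 1)/N)) atTop (nhds 0) := by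
    simpa using (tendsto_logdiv).const_mul (c0 n d)
  have h2 : ∀ᶠ N : ℕ in atTop, c0 n d * ((Real.log ((N:ℝ)+1) + 1)/N) < ε/2 :=
    hc0.eventually_lt_const (half_pos hε)
  filter_upwards [h1, h2, eventually_gt_atTop 0] with N hN1 hN2 hN3
  obtain ⟨k, hks, hkb⟩ := exists_kN n d p hp0 hp1 N hN3
  set q : (Fin n → Fin d) → ℝ := fun z => (k z : ℝ)/N with hq
  have hqlt : ∀ z, |q z - p z| < min δ δ₁ := fun z => lt_of_le_of_lt (hkb z) hN1
  have hqδ : ∀ z, |q z - p z| < δ := fun z => lt_of_lt_of_le (hqlt z) (min_le_left _ _)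
  have hlow := symQ_lower n d N p δ hN3 k hks hqδ
  have hdist : dist q p < δ₁ := by
    rw [dist_pi_lt_iff hδ₁pos]
    intro z
    rw [Real.dist_eq]
    exact lt_of_lt_of_le (hqlt z) (min_le_right _ _)
  have hF : |Fent n d q - Fent n d p| < ε/2 := by
    have := hδ₁ hdist
    rwa [Real.dist_eq] at this
  refine ⟨?_, ?_⟩
  · have e1 : c0 n d * (Real.log ((N:ℝ)+1) + 1) / N
        = c0 n d * ((Real.log ((N:ℝ)+1) + 1)/N) := by ring
    rw [e1] at hlow
    have := abs_lt.mp hF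
    linarith
  · refine lt_of_lt_of_le ?_ (lower_card n d N p δ k hks hqδ)
    apply Nat.mul_pos (Tk_card_pos n d N k hks)
    exact Finset.prod_pos fun i _ => Finset.prod_pos fun t _ => Nat.factorial_pos _

lemma eventually_upper (hp0 : ∀ z, 0 ≤ p z) (hp1 : ∑ z, p z = 1)
    {ε : ℝ} (hε : 0 < ε) :
    ∃ δ₀ : ℝ, 0 < δ₀ ∧ ∀ δ : ℝ, 0 < δ → δ ≤ δ₀ →
      ∀ᶠ N : ℕ in atTop, symQDiscrete n d p N δ ≤ Fent n d p + ε := by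
  obtain ⟨δ₁, hδ₁pos, hδ₁⟩ := Metric.continuousAt_iff.mp
    ((continuous_Fent n d).continuousAt (x := p)) (ε/2) (half_pos hε)
  refine ⟨δ₁/2, half_pos hδ₁pos, fun δ hδpos hδle => ?_⟩
  have herr : Tendsto (fun N : ℕ => ((Fintype.card (Fin n → Fin d) : ℝ) * Real.log ((N:ℝ)+1)
      + c0 n d * (Real.log ((N:ℝ)+1) + 1)) / N) atTop (nhds 0) := by
    have ha := (tendsto_logdiv).const_mul ((Fintype.card (Fin n → Fin d) : ℝ) + c0 n d)
    have hb := tendsto_const_div_atTop_nhds_zero_nat (Fintype.card (Fin n → Fin d) : ℝ)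
    have hcomb := ha.sub hb
    have heq : ∀ N : ℕ, ((Fintype.card (Fin n → Fin d) : ℝ) + c0 n d)
          * ((Real.log ((N:ℝ)+1) + 1)/N) - (Fintype.card (Fin n → Fin d) : ℝ)/N
        = ((Fintype.card (Fin n → Fin d) : ℝ) * Real.log ((N:ℝ)+1)
          + c0 n d * (Real.log ((N:ℝ)+1) + 1)) / N := by
      intro N
      by_cases hN : (N:ℝ) = 0
      · rw [hN]; simp
      · field_simp
        ring
    have : Tendsto (fun N : ℕ => ((Fintype.card (Fin n → Fin d) : ℝ) + c0 n d)
        * ((Real.log ((N:ℝ)+1) + 1)/N) - (Fintype.card (Fin n → Fin d) : ℝ)/N)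
        atTop (nhds 0) := by simpa using hcomb
    exact this.congr heq
  have h2 : ∀ᶠ N : ℕ in atTop, ((Fintype.card (Fin n → Fin d) : ℝ) * Real.log ((N:ℝ)+1)
      + c0 n d * (Real.log ((N:ℝ)+1) + 1)) / N < ε/2 :=
    herr.eventually_lt_const (half_pos hε)
  have h3 := eventually_lower n d p hp0 hp1 hδpos one_pos
  filter_upwards [h2, h3, eventually_gt_atTop 0] with N hN2 hN3 hN4
  have hB : ∀ k : (Fin n → Fin d) → ℕ, (∑ z, k z = N) → (∀ z, |(k z:ℝ)/N - p z| < δ) →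
      Fent n d (fun z => (k z:ℝ)/N) ≤ Fent n d p + ε/2 := by
    intro k hks hkδ
    have hdist : dist (fun z => (k z:ℝ)/N) p < δ₁ := by
      rw [dist_pi_lt_iff hδ₁pos]
      intro z
      rw [Real.dist_eq]
      exact lt_of_lt_of_le (hkδ z) (by linarith)
    have hF := hδ₁ hdist
    rw [Real.dist_eq] at hF
    linarith [(abs_lt.mp hF).2]
  have hup := symQ_upper n d N p δ hN4 hN3.2 _ hB
  linarith

end Stmt17Aux3

namespace Stmt17Aux3

open Stmt17Aux Stmt17Aux2

variable (n d : ℕ) (p : (Fin n → Fin d) → ℝ)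

lemma lim_close (hp0 : ∀ z, 0 ≤ p z) (hp1 : ∑ z, p z = 1)
    {ε : ℝ} (hε : 0 < ε) :
    ∃ δ₀ : ℝ, 0 < δ₀ ∧ ∀ δ : ℝ, 0 < δ → δ ≤ δ₀ →
      |Filter.limsup (fun N : ℕ => symQDiscrete n d p N δ) atTop - Fent n d p| ≤ ε ∧
      |Filter.liminf (fun N : ℕ => symQDiscrete n d p N δ) atTop - Fent n d p| ≤ ε := by
  obtain ⟨δ₀, hδ₀pos, hδ₀⟩ := eventually_upper n d p hp0 hp1 hε
  refine ⟨δ₀, hδ₀pos, fun δ hδpos hδle => ?_⟩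
  set u : ℕ → ℝ := fun N => symQDiscrete n d p N δ with hu
  have hbdd_above : Filter.IsBoundedUnder (· ≤ ·) atTop u :=
    Filter.isBoundedUnder_of ⟨0, fun N => symQ_nonpos n d N p δ⟩
  have hev_low : ∀ᶠ N : ℕ in atTop, Fent n d p - ε ≤ u N :=
    (eventually_lower n d p hp0 hp1 hδpos hε).mono fun N h => h.1
  have hev_up : ∀ᶠ N : ℕ in atTop, u N ≤ Fent n d p + ε := hδ₀ δ hδpos hδle
  have hbdd_below : Filter.IsBoundedUnder (· ≥ ·) atTop u := ⟨Fent n d p - ε, hev_low⟩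
  have hliminf_ge : Fent n d p - ε ≤ liminf u atTop :=
    le_liminf_of_le hbdd_above.isCoboundedUnder_ge hev_low
  have hlimsup_le : limsup u atTop ≤ Fent n d p + ε :=
    limsup_le_of_le hbdd_below.isCoboundedUnder_le hev_up
  have hll : liminf u atTop ≤ limsup u atTop := liminf_le_limsup hbdd_above hbdd_below
  constructor
  · rw [abs_le]; constructor <;> linarith
  · rw [abs_le]; constructor <;> linarith

lemma fent_target (hp0 : ∀ z, 0 ≤ p z) :
    (-(-∑ z, p z * Real.log (p z)) +
        ∑ i : Fin n, (-∑ t : Fin d,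
          (∑ z : Fin n → Fin d, if z i = t then p z else 0) *
            Real.log (∑ z : Fin n → Fin d, if z i = t then p z else 0)))
      = -(Fent n d p) := by
  have hmarg : ∀ (i : Fin n) (t : Fin d),
      (∑ z : Fin n → Fin d, if z i = t then p z else 0) = margR n d p i t := by
    intro i t
    unfold margR
    exact (Finset.sum_filter _ _).symm
  simp only [hmarg]
  unfold Fent Hq
  ring

end Stmt17Aux3


open Stmt17Aux3

/-- Theorem 2.5: for discrete random variables with joint distribution `p`,
`-lim_{δ→0+} limsup_N (1/N) log γ(Δ_sym) = -lim_{δ→0+} liminf_N (…)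
  = -S(X₁,…,Xₙ) + ∑ᵢ S(Xᵢ)`. -/
theorem stmt17 (n d : ℕ) (p : (Fin n → Fin d) → ℝ)
    (hp0 : ∀ z, 0 ≤ p z) (hp1 : ∑ z, p z = 1) :
    Tendsto (fun δ : ℝ =>
        -Filter.limsup (fun N : ℕ => symQDiscrete n d p N δ) atTop)
      (nhdsWithin 0 (Set.Ioi 0))
      (nhds (-(-∑ z, p z * Real.log (p z)) +
        ∑ i : Fin n, (-∑ t : Fin d,
          (∑ z : Fin n → Fin d, if z i = t then p z else 0) *
            Real.log (∑ z : Fin n → Fin d, if z i = t then p z else 0)))) ∧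
    Tendsto (fun δ : ℝ =>
        -Filter.liminf (fun N : ℕ => symQDiscrete n d p N δ) atTop)
      (nhdsWithin 0 (Set.Ioi 0))
      (nhds (-(-∑ z, p z * Real.log (p z)) +
        ∑ i : Fin n, (-∑ t : Fin d,
          (∑ z : Fin n → Fin d, if z i = t then p z else 0) *
            Real.log (∑ z : Fin n → Fin d, if z i = t then p z else 0)))) := by
  rw [fent_target n d p hp0]
  constructor
  · rw [Metric.tendsto_nhdsWithin_nhds]
    intro ε hε
    obtain ⟨δ₀, hδ₀pos, hδ₀⟩ := lim_close n d p hp0 hp1 (half_pos hε)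
    refine ⟨δ₀, hδ₀pos, fun {δ} hδmem hδdist => ?_⟩
    have hδpos : 0 < δ := hδmem
    have hδle : δ ≤ δ₀ := by
      rw [Real.dist_eq, sub_zero, abs_of_pos hδpos] at hδdist
      linarith
    have h := (hδ₀ δ hδpos hδle).1
    rw [Real.dist_eq]
    have : -Filter.limsup (fun N : ℕ => symQDiscrete n d p N δ) atTop - -(Fent n d p)
        = -(Filter.limsup (fun N : ℕ => symQDiscrete n d p N δ) atTop - Fent n d p) := by ring
    rw [this, abs_neg]
    linarith
  · rw [Metric.tendsto_nhdsWithin_nhds]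
    intro ε hε
    obtain ⟨δ₀, hδ₀pos, hδ₀⟩ := lim_close n d p hp0 hp1 (half_pos hε)
    refine ⟨δ₀, hδ₀pos, fun {δ} hδmem hδdist => ?_⟩
    have hδpos : 0 < δ := hδmem
    have hδle : δ ≤ δ₀ := by
      rw [Real.dist_eq, sub_zero, abs_of_pos hδpos] at hδdist
      linarith
    have h := (hδ₀ δ hδpos hδle).2
    rw [Real.dist_eq]
    have : -Filter.liminf (fun N : ℕ => symQDiscrete n d p N δ) atTop - -(Fent n d p)
        = -(Filter.liminf (fun N : ℕ => symQDiscrete n d p N δ) atTop - Fent n d p) := by ring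
    rw [this, abs_neg]
    linarith
end

section
/- Let X_1,...,X_n take values in a finite set X of cardinality d, with joint distribution p and marginals p_{X_i}. Fix for each i a sequence ξ_i(N) ∈ X_≤^N of sorted sequences whose types converge to p_{X_i}. Then for every δ > 0 there exist δ' > 0 (one may take 3nd^{n+1}δ' ≤ δ) and N_0 such that for all N ≥ N_0, Δ_sym(X_1,...,X_n;N,δ') ⊆ Δ_sym(X_1,...,X_n : ξ_1(N),...,ξ_n(N);N,δ); consequently the limits defining I_sym via arbitrary sorted witnesses and via the fixed approximating sequences ξ_i coincide. -/
open Finset Filter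

/-- Discrete permutation micro-states with the fixed witnesses `ξᵢ(N)`. -/
def DeltaSymDiscreteXi (n d : ℕ) (p : (Fin n → Fin d) → ℝ) (N : ℕ)
    (ξ : Fin n → Fin N → Fin d) (δ : ℝ) :
    Set (Fin n → Equiv.Perm (Fin N)) :=
  {σ | ∀ z : Fin n → Fin d,
    |((Finset.univ.filter fun j : Fin N =>
        ∀ i, ξ i ((σ i)⁻¹ j) = z i).card : ℝ) / N - p z| < δ}

/-- `(1/N) log γ_{S_N}^{⊗n}` of a set of permutation tuples. -/
noncomputable def symLogProb (n N : ℕ) (A : Set (Fin n → Equiv.Perm (Fin N))) : ℝ :=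
  Real.log ((Nat.card A : ℝ) / (N.factorial : ℝ) ^ n) / N

/-! ### Auxiliary lemmas -/

lemma card_filter_perm {N : ℕ} (σ : Equiv.Perm (Fin N)) (P : Fin N → Prop) [DecidablePred P] :
    (univ.filter fun j => P (σ j)).card = (univ.filter fun j => P j).card := by
  apply Finset.card_equiv σ
  intro a
  simp

lemma card_filter_fiberwise {N : ℕ} {β : Type*} [Fintype β] [DecidableEq β]
    (f : Fin N → β) (Q : β → Prop) [DecidablePred Q] :
    (univ.filter fun j => Q (f j)).card
      = ∑ b ∈ univ.filter Q, (univ.filter fun j => f j = b).card := by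
  rw [Finset.card_eq_sum_card_fiberwise (f := f) (t := univ.filter Q)
    (by intro j hj; simpa using (Finset.mem_filter.mp hj).2)]
  refine Finset.sum_congr rfl fun b hb => ?_
  congr 1
  ext j
  simp only [Finset.mem_filter, Finset.mem_univ, true_and]
  constructor
  · rintro ⟨_, h⟩; exact h
  · rintro h; exact ⟨h ▸ (Finset.mem_filter.mp hb).2, h⟩

lemma mem_down {N : ℕ} {S : Finset (Fin N)}
    (hS : ∀ ⦃j k : Fin N⦄, k ≤ j → j ∈ S → k ∈ S) (j : Fin N) :
    j ∈ S ↔ (j : ℕ) < S.card := by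
  constructor
  · intro hj
    have hsub : Finset.Iic j ⊆ S := fun k hk => hS (Finset.mem_Iic.mp hk) hj
    have := Finset.card_le_card hsub
    rwa [Fin.card_Iic, Nat.succ_le_iff] at this
  · intro hj
    by_contra hjS
    have hsub : S ⊆ Finset.Iio j := by
      intro k hk
      rw [Finset.mem_Iio]
      by_contra hkj
      exact hjS (hS (le_of_not_gt hkj) hk)
    have := Finset.card_le_card hsub
    rw [Fin.card_Iio] at this
    omega

lemma down_subset {N : ℕ} {S T : Finset (Fin N)}
    (hS : ∀ ⦃j k : Fin N⦄, k ≤ j → j ∈ S → k ∈ S)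
    (hT : ∀ ⦃j k : Fin N⦄, k ≤ j → j ∈ T → k ∈ T)
    (h : S.card ≤ T.card) : S ⊆ T := by
  intro j hj
  rw [mem_down hT]
  exact lt_of_lt_of_le ((mem_down hS j).mp hj) h

lemma sdiff_union_card {N : ℕ} {S T : Finset (Fin N)}
    (hS : ∀ ⦃j k : Fin N⦄, k ≤ j → j ∈ S → k ∈ S)
    (hT : ∀ ⦃j k : Fin N⦄, k ≤ j → j ∈ T → k ∈ T) :
    ((((S \ T) ∪ (T \ S)).card : ℝ)) = |(S.card : ℝ) - (T.card : ℝ)| := by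
  rcases le_total S.card T.card with h | h
  · have hsub := down_subset hS hT h
    have h1 : S \ T = ∅ := Finset.sdiff_eq_empty_iff_subset.mpr hsub
    rw [h1, Finset.empty_union, Finset.card_sdiff_of_subset hsub, abs_sub_comm,
      abs_of_nonneg (by simp [h] : (0:ℝ) ≤ (T.card : ℝ) - S.card)]
    norm_num [Nat.cast_sub h]
  · have hsub := down_subset hT hS h
    have h1 : T \ S = ∅ := Finset.sdiff_eq_empty_iff_subset.mpr hsub
    rw [h1, Finset.union_empty, Finset.card_sdiff_of_subset hsub,
      abs_of_nonneg (by simp [h] : (0:ℝ) ≤ (S.card : ℝ) - T.card)]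
    norm_num [Nat.cast_sub h]

lemma hamming_bound {N d : ℕ} {x y : Fin N → Fin d} (hx : Monotone x) (hy : Monotone y) :
    ((univ.filter fun j => x j ≠ y j).card : ℝ)
      ≤ d * ∑ t : Fin d, |((univ.filter fun j => x j = t).card : ℝ)
          - ((univ.filter fun j => y j = t).card : ℝ)| := by
  set S : Fin d → Finset (Fin N) := fun t => univ.filter fun j => x j < t with hSdef
  set T : Fin d → Finset (Fin N) := fun t => univ.filter fun j => y j < t with hTdef
  have hSd : ∀ t, ∀ ⦃j k : Fin N⦄, k ≤ j → j ∈ S t → k ∈ S t := by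
    intro t j k hkj hj
    simp only [hSdef, Finset.mem_filter, Finset.mem_univ, true_and] at *
    exact lt_of_le_of_lt (hx hkj) hj
  have hTd : ∀ t, ∀ ⦃j k : Fin N⦄, k ≤ j → j ∈ T t → k ∈ T t := by
    intro t j k hkj hj
    simp only [hTdef, Finset.mem_filter, Finset.mem_univ, true_and] at *
    exact lt_of_le_of_lt (hy hkj) hj
  have hsub : (univ.filter fun j => x j ≠ y j)
      ⊆ univ.biUnion (fun t => (S t \ T t) ∪ (T t \ S t)) := by
    intro j hj
    have hxy : x j ≠ y j := by simpa using hj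
    rw [Finset.mem_biUnion]
    rcases lt_or_gt_of_ne hxy with h | h
    · exact ⟨y j, Finset.mem_univ _, Finset.mem_union_left _ (Finset.mem_sdiff.mpr
        ⟨by simp [hSdef, h], by simp [hTdef]⟩)⟩
    · exact ⟨x j, Finset.mem_univ _, Finset.mem_union_right _ (Finset.mem_sdiff.mpr
        ⟨by simp [hTdef, h], by simp [hSdef]⟩)⟩
  calc ((univ.filter fun j => x j ≠ y j).card : ℝ)
      ≤ ((univ.biUnion (fun t => (S t \ T t) ∪ (T t \ S t))).card : ℝ) := by
        exact_mod_cast Finset.card_le_card hsub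
    _ ≤ ∑ t : Fin d, (((S t \ T t) ∪ (T t \ S t)).card : ℝ) := by
        exact_mod_cast Finset.card_biUnion_le
    _ = ∑ t : Fin d, |((S t).card : ℝ) - ((T t).card : ℝ)| :=
        Finset.sum_congr rfl fun t _ => sdiff_union_card (hSd t) (hTd t)
    _ ≤ ∑ _t : Fin d, ∑ s : Fin d, |((univ.filter fun j => x j = s).card : ℝ)
          - ((univ.filter fun j => y j = s).card : ℝ)| := by
        refine Finset.sum_le_sum fun t _ => ?_
        have hS' : ((S t).card : ℝ) = ∑ s ∈ univ.filter (· < t),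
            ((univ.filter fun j => x j = s).card : ℝ) := by
          rw [hSdef]; push_cast [card_filter_fiberwise x (· < t)]; rfl
        have hT' : ((T t).card : ℝ) = ∑ s ∈ univ.filter (· < t),
            ((univ.filter fun j => y j = s).card : ℝ) := by
          rw [hTdef]; push_cast [card_filter_fiberwise y (· < t)]; rfl
        rw [hS', hT', ← Finset.sum_sub_distrib]
        refine le_trans (Finset.abs_sum_le_sum_abs _ _) ?_
        exact Finset.sum_le_sum_of_subset_of_nonneg (Finset.filter_subset _ _)
          (fun s _ _ => abs_nonneg _)
    _ = d * ∑ s : Fin d, |((univ.filter fun j => x j = s).card : ℝ)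
          - ((univ.filter fun j => y j = s).card : ℝ)| := by
        rw [Finset.sum_const, Finset.card_univ, Fintype.card_fin, nsmul_eq_mul]

lemma exists_fun_counts {β : Type*} [Fintype β] [DecidableEq β] {N : ℕ} (k : β → ℕ)
    (hk : ∑ b, k b = N) :
    ∃ y : Fin N → β, ∀ b, (univ.filter fun j => y j = b).card = k b := by
  have hcard : Fintype.card (Σ b : β, Fin (k b)) = N := by
    simp [Fintype.card_sigma, hk]
  let e : (Σ b : β, Fin (k b)) ≃ Fin N := Fintype.equivFinOfCardEq hcard
  refine ⟨fun j => (e.symm j).1, fun b => ?_⟩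
  have h1 : (univ.filter fun j => (e.symm j).1 = b).card
      = (univ.filter fun a : Σ b' : β, Fin (k b') => a.1 = b).card := by
    apply Finset.card_equiv e.symm
    intro a; simp
  rw [h1, ← Fintype.card_subtype]
  have e2 : {a : Σ b' : β, Fin (k b') // a.1 = b} ≃ Fin (k b) :=
    { toFun := fun a => Fin.cast (congrArg k a.2) a.1.2
      invFun := fun v => ⟨⟨b, v⟩, rfl⟩
      left_inv := by rintro ⟨⟨b', v⟩, rfl⟩; rfl
      right_inv := fun v => rfl }
  rw [Fintype.card_congr e2, Fintype.card_fin]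

lemma symLogProb_mono {n N : ℕ} (hN : 1 ≤ N) {A B : Set (Fin n → Equiv.Perm (Fin N))}
    (hA : A.Nonempty) (hAB : A ⊆ B) :
    symLogProb n N A ≤ symLogProb n N B := by
  unfold symLogProb
  have hK : (0:ℝ) < (N.factorial : ℝ) ^ n := by positivity
  have hApos : 0 < Nat.card A := by
    have := hA.to_subtype
    exact Nat.card_pos
  have hcard : Nat.card A ≤ Nat.card B := Nat.card_mono (Set.toFinite B) hAB
  have h1 : (0:ℝ) < (Nat.card A : ℝ) / (N.factorial : ℝ) ^ n := by
    apply div_pos _ hK; exact_mod_cast hApos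
  have h2 : (Nat.card A : ℝ) / (N.factorial : ℝ) ^ n
      ≤ (Nat.card B : ℝ) / (N.factorial : ℝ) ^ n :=
    div_le_div_of_nonneg_right (by exact_mod_cast hcard) hK.le
  have hlog := Real.log_le_log h1 h2
  have hNpos : (0:ℝ) < N := by exact_mod_cast hN
  exact div_le_div_of_nonneg_right hlog hNpos.le

lemma delta_nonempty (n d : ℕ) (p : (Fin n → Fin d) → ℝ)
    (hp0 : ∀ z, 0 ≤ p z) (hp1 : ∑ z, p z = 1) (δ : ℝ)
    (N : ℕ) (hN1 : 1 ≤ N)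
    (hN : ((Fintype.card (Fin n → Fin d) : ℝ) + 1) < N * δ) :
    (DeltaSymDiscrete n d p N δ).Nonempty := by
  classical
  have hZne : Nonempty (Fin n → Fin d) := by
    by_contra h
    rw [not_nonempty_iff] at h
    simp [Finset.univ_eq_empty] at hp1
  set D : ℕ := Fintype.card (Fin n → Fin d) with hD
  have hNpos : (0:ℝ) < N := by exact_mod_cast hN1
  obtain ⟨z0⟩ := hZne
  set m : (Fin n → Fin d) → ℕ := fun z => ⌊(N : ℝ) * p z⌋₊ with hm
  have hmle : ∀ z, (m z : ℝ) ≤ N * p z := fun z =>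
    Nat.floor_le (mul_nonneg (Nat.cast_nonneg N) (hp0 z))
  have hmgt : ∀ z, (N : ℝ) * p z < m z + 1 := fun z => Nat.lt_floor_add_one _
  have hsum_le : ∑ z, m z ≤ N := by
    have : ((∑ z, m z : ℕ) : ℝ) ≤ N := by
      push_cast
      calc ∑ z, (m z : ℝ) ≤ ∑ z, (N : ℝ) * p z := Finset.sum_le_sum fun z _ => hmle z
        _ = N := by rw [← Finset.mul_sum, hp1, mul_one]
    exact_mod_cast this
  set r : ℕ := N - ∑ z, m z with hr
  have hrval : (r : ℝ) = (N : ℝ) - ∑ z, (m z : ℝ) := by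
    rw [hr]; push_cast [Nat.cast_sub hsum_le]; ring
  have hrlt : (r : ℝ) < D := by
    have : (N:ℝ) - ∑ z, (m z : ℝ) < ∑ z : Fin n → Fin d, (1:ℝ) := by
      have h1 : (N:ℝ) = ∑ z, (N:ℝ) * p z := by rw [← Finset.mul_sum, hp1, mul_one]
      rw [h1, ← Finset.sum_sub_distrib]
      refine Finset.sum_lt_sum_of_nonempty ⟨z0, Finset.mem_univ z0⟩ fun z _ => ?_
      have := hmgt z
      linarith
    rw [hrval]
    refine this.trans_le ?_
    simp [hD]
  set k : (Fin n → Fin d) → ℕ := fun z => m z + if z = z0 then r else 0 with hk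
  have hksum : ∑ z, k z = N := by
    rw [hk]
    rw [Finset.sum_add_distrib, Finset.sum_ite_eq' univ z0 fun _ => r]
    simp [hr, Nat.sub_add_cancel hsum_le, Nat.add_sub_cancel' hsum_le]
  obtain ⟨y, hy⟩ := exists_fun_counts k hksum
  set σ : Fin n → Equiv.Perm (Fin N) := fun i => Tuple.sort (fun j => y j i) with hσ
  refine ⟨σ, fun i => (fun j => y j i) ∘ (Tuple.sort (fun j => y j i)),
    fun i => Tuple.monotone_sort _, fun z => ?_⟩
  have hfilter : (Finset.univ.filter fun j : Fin N =>
      ∀ i, ((fun j => y j i) ∘ (Tuple.sort (fun j => y j i))) ((σ i)⁻¹ j) = z i)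
      = Finset.univ.filter fun j => y j = z := by
    apply Finset.filter_congr
    intro j _
    simp only [hσ, Function.comp_apply, Equiv.Perm.inv_def, Equiv.apply_symm_apply, eq_iff_iff]
    rw [funext_iff]
  rw [hfilter, hy z]
  -- now bound |k z / N - p z| < δ
  have hD1 : (1:ℝ) ≤ D := by
    have : 0 < D := Fintype.card_pos_iff.mpr ⟨z0⟩
    exact_mod_cast this
  have hk0 : (k z : ℝ) = (m z : ℝ) + (if z = z0 then (r:ℝ) else 0) := by
    rw [hk]; push_cast; split <;> simp
  have hr0 : (0:ℝ) ≤ r := Nat.cast_nonneg r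
  have h1 := hmle z
  have h2 := hmgt z
  have key : |(k z:ℝ) - N * p z| ≤ (D:ℝ) + 1 := by
    rw [abs_le, hk0]
    constructor
    · split <;> linarith
    · split <;> linarith
  have heq : (k z:ℝ) / N - p z = ((k z:ℝ) - N * p z) / N := by
    field_simp
  rw [heq, abs_div, abs_of_pos hNpos]
  calc |(k z:ℝ) - N * p z| / N ≤ ((D:ℝ) + 1) / N := by gcongr
    _ < δ := by rw [div_lt_iff₀ hNpos]; linarith [hN]

lemma containment_aux {n d N : ℕ} (hN1 : 1 ≤ N) (p : (Fin n → Fin d) → ℝ)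
    (ξN : Fin n → Fin N → Fin d) (hξmono : ∀ i, Monotone (ξN i))
    (hd : ∀ _i : Fin n, 0 < d)
    (δ δ' : ℝ) (hδ'pos : 0 < δ')
    (hξclose : ∀ (i : Fin n) (t : Fin d),
      |((univ.filter fun j => ξN i j = t).card : ℝ) / N
        - ∑ z : Fin n → Fin d, (if z i = t then p z else 0)| ≤ δ')
    (htot : δ' * (1 + 2 * (n:ℝ) * (d:ℝ) ^ (n+2)) ≤ δ) :
    DeltaSymDiscrete n d p N δ' ⊆ DeltaSymDiscreteXi n d p N ξN δ := by
  classical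
  rintro σ ⟨x, hxmono, hx⟩ z
  have hNpos : (0:ℝ) < N := by exact_mod_cast hN1
  set q : Fin n → Fin d → ℝ :=
    fun i t => ∑ z : Fin n → Fin d, (if z i = t then p z else 0) with hq
  set f : Fin N → (Fin n → Fin d) := fun j i' => x i' ((σ i')⁻¹ j) with hf
  have hAeq : ∀ z' : Fin n → Fin d,
      (univ.filter fun j : Fin N => ∀ i', x i' ((σ i')⁻¹ j) = z' i')
        = univ.filter fun j => f j = z' := by
    intro z'
    apply Finset.filter_congr
    intro j _
    exact funext_iff.symm
  -- Step A : marginals of the witness are close to the marginals of p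
  have stepA : ∀ (i : Fin n) (t : Fin d),
      |((univ.filter fun j => x i j = t).card : ℝ) / N - q i t| ≤ (d:ℝ)^n * δ' := by
    intro i t
    have hperm : (univ.filter fun j => x i j = t).card
        = (univ.filter fun j : Fin N => x i ((σ i)⁻¹ j) = t).card :=
      (card_filter_perm (σ i)⁻¹ (fun j => x i j = t)).symm
    have hfib := card_filter_fiberwise f (fun z' => z' i = t)
    have hqe : q i t = ∑ z' ∈ univ.filter (fun z' : Fin n → Fin d => z' i = t), p z' := by
      rw [hq, Finset.sum_filter]
    have hcast : ((univ.filter fun j => x i j = t).card : ℝ) / N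
        = ∑ z' ∈ univ.filter (fun z' : Fin n → Fin d => z' i = t),
            ((univ.filter fun j => f j = z').card : ℝ) / N := by
      rw [hperm]
      have : (univ.filter fun j : Fin N => x i ((σ i)⁻¹ j) = t)
          = univ.filter fun j => f j i = t := rfl
      rw [this, hfib]
      push_cast
      rw [Finset.sum_div]
    rw [hcast, hqe, ← Finset.sum_sub_distrib]
    calc |∑ z' ∈ univ.filter (fun z' : Fin n → Fin d => z' i = t),
            (((univ.filter fun j => f j = z').card : ℝ) / N - p z')|
        ≤ ∑ z' ∈ univ.filter (fun z' : Fin n → Fin d => z' i = t),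
            |((univ.filter fun j => f j = z').card : ℝ) / N - p z'| :=
          Finset.abs_sum_le_sum_abs _ _
      _ ≤ ∑ _z' ∈ univ.filter (fun z' : Fin n → Fin d => z' i = t), δ' := by
          refine Finset.sum_le_sum fun z' _ => ?_
          rw [← hAeq z']
          exact (hx z').le
      _ ≤ (d:ℝ)^n * δ' := by
          rw [Finset.sum_const, nsmul_eq_mul]
          have hle : ((univ.filter (fun z' : Fin n → Fin d => z' i = t)).card : ℝ)
              ≤ (d:ℝ)^n := by
            have h1 : (univ.filter (fun z' : Fin n → Fin d => z' i = t)).card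
                ≤ Fintype.card (Fin n → Fin d) := by
              rw [← Finset.card_univ]
              exact Finset.card_le_card (Finset.filter_subset _ _)
            have h2 : Fintype.card (Fin n → Fin d) = d ^ n := by
              simp
            rw [h2] at h1
            exact_mod_cast h1
          nlinarith
  -- Step C : Hamming distance between witness and ξ is small
  have stepC : ∀ i : Fin n,
      ((univ.filter fun j => x i j ≠ ξN i j).card : ℝ) / N ≤ 2 * (d:ℝ)^(n+2) * δ' := by
    intro i
    have hd1 : (1:ℝ) ≤ (d:ℝ) := by exact_mod_cast hd i
    have hham := hamming_bound (hxmono i) (hξmono i)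
    have hdiv : ((univ.filter fun j => x i j ≠ ξN i j).card : ℝ) / N
        ≤ (d:ℝ) * ∑ t : Fin d, |((univ.filter fun j => x i j = t).card : ℝ) / N
            - ((univ.filter fun j => ξN i j = t).card : ℝ) / N| := by
      rw [div_le_iff₀ hNpos]
      calc ((univ.filter fun j => x i j ≠ ξN i j).card : ℝ)
          ≤ (d:ℝ) * ∑ t : Fin d, |((univ.filter fun j => x i j = t).card : ℝ)
              - ((univ.filter fun j => ξN i j = t).card : ℝ)| := hham
        _ = ((d:ℝ) * ∑ t : Fin d, |((univ.filter fun j => x i j = t).card : ℝ) / N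
              - ((univ.filter fun j => ξN i j = t).card : ℝ) / N|) * N := by
            rw [mul_assoc, Finset.sum_mul]
            congr 1
            refine Finset.sum_congr rfl fun t _ => ?_
            rw [div_sub_div_same, abs_div, abs_of_pos hNpos, div_mul_cancel₀]
            exact ne_of_gt hNpos
    have hterm : ∀ t : Fin d,
        |((univ.filter fun j => x i j = t).card : ℝ) / N
          - ((univ.filter fun j => ξN i j = t).card : ℝ) / N| ≤ ((d:ℝ)^n + 1) * δ' := by
      intro t
      calc |((univ.filter fun j => x i j = t).card : ℝ) / N
            - ((univ.filter fun j => ξN i j = t).card : ℝ) / N|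
          ≤ |((univ.filter fun j => x i j = t).card : ℝ) / N - q i t|
            + |q i t - ((univ.filter fun j => ξN i j = t).card : ℝ) / N| :=
            abs_sub_le _ _ _
        _ = |((univ.filter fun j => x i j = t).card : ℝ) / N - q i t|
            + |((univ.filter fun j => ξN i j = t).card : ℝ) / N - q i t| := by
            rw [abs_sub_comm (q i t)]
        _ ≤ (d:ℝ)^n * δ' + δ' := add_le_add (stepA i t) (hξclose i t)
        _ = ((d:ℝ)^n + 1) * δ' := by ring
    calc ((univ.filter fun j => x i j ≠ ξN i j).card : ℝ) / N
        ≤ (d:ℝ) * ∑ t : Fin d, |((univ.filter fun j => x i j = t).card : ℝ) / N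
            - ((univ.filter fun j => ξN i j = t).card : ℝ) / N| := hdiv
      _ ≤ (d:ℝ) * ∑ _t : Fin d, ((d:ℝ)^n + 1) * δ' := by
          refine mul_le_mul_of_nonneg_left (Finset.sum_le_sum fun t _ => hterm t)
            (by positivity)
      _ = ((d:ℝ)^(n+2) + (d:ℝ)^2) * δ' := by
          rw [Finset.sum_const, Finset.card_univ, Fintype.card_fin, nsmul_eq_mul]
          ring
      _ ≤ 2 * (d:ℝ)^(n+2) * δ' := by
          have : (d:ℝ)^2 ≤ (d:ℝ)^(n+2) := pow_le_pow_right₀ hd1 (by omega)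
          nlinarith
  -- Step D : compare the two filter cardinalities
  set A : Finset (Fin N) :=
    univ.filter fun j : Fin N => ∀ i, x i ((σ i)⁻¹ j) = z i with hA
  set B : Finset (Fin N) :=
    univ.filter fun j : Fin N => ∀ i, ξN i ((σ i)⁻¹ j) = z i with hB
  set E : Fin n → Finset (Fin N) :=
    fun i => univ.filter fun j => x i j ≠ ξN i j with hE
  set E' : Fin n → Finset (Fin N) :=
    fun i => univ.filter fun j : Fin N => x i ((σ i)⁻¹ j) ≠ ξN i ((σ i)⁻¹ j) with hE'
  have hEcard : ∀ i, (E' i).card = (E i).card := fun i =>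
    card_filter_perm (σ i)⁻¹ (fun j => x i j ≠ ξN i j)
  have hBsub : B ⊆ A ∪ univ.biUnion E' := by
    intro j hj
    rw [hB, Finset.mem_filter] at hj
    by_cases hjA : j ∈ A
    · exact Finset.mem_union_left _ hjA
    · refine Finset.mem_union_right _ ?_
      rw [hA, Finset.mem_filter] at hjA
      push_neg at hjA
      obtain ⟨i, hi⟩ := hjA (Finset.mem_univ j)
      refine Finset.mem_biUnion.mpr ⟨i, Finset.mem_univ i, ?_⟩
      rw [hE', Finset.mem_filter]
      exact ⟨Finset.mem_univ j, fun h => hi (h.trans (hj.2 i))⟩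
  have hAsub : A ⊆ B ∪ univ.biUnion E' := by
    intro j hj
    rw [hA, Finset.mem_filter] at hj
    by_cases hjB : j ∈ B
    · exact Finset.mem_union_left _ hjB
    · refine Finset.mem_union_right _ ?_
      rw [hB, Finset.mem_filter] at hjB
      push_neg at hjB
      obtain ⟨i, hi⟩ := hjB (Finset.mem_univ j)
      refine Finset.mem_biUnion.mpr ⟨i, Finset.mem_univ i, ?_⟩
      rw [hE', Finset.mem_filter]
      exact ⟨Finset.mem_univ j, fun h => hi (h.symm.trans (hj.2 i))⟩
  have hcard1 : (B.card : ℝ) ≤ A.card + ∑ i, ((E i).card : ℝ) := by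
    have h1 : B.card ≤ A.card + ∑ i, (E' i).card := by
      calc B.card ≤ (A ∪ univ.biUnion E').card := Finset.card_le_card hBsub
        _ ≤ A.card + (univ.biUnion E').card := Finset.card_union_le _ _
        _ ≤ A.card + ∑ i, (E' i).card :=
            Nat.add_le_add_left Finset.card_biUnion_le _
    have h2 : ∑ i, (E' i).card = ∑ i, (E i).card :=
      Finset.sum_congr rfl fun i _ => hEcard i
    rw [h2] at h1
    exact_mod_cast h1
  have hcard2 : (A.card : ℝ) ≤ B.card + ∑ i, ((E i).card : ℝ) := by
    have h1 : A.card ≤ B.card + ∑ i, (E' i).card := by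
      calc A.card ≤ (B ∪ univ.biUnion E').card := Finset.card_le_card hAsub
        _ ≤ B.card + (univ.biUnion E').card := Finset.card_union_le _ _
        _ ≤ B.card + ∑ i, (E' i).card :=
            Nat.add_le_add_left Finset.card_biUnion_le _
    have h2 : ∑ i, (E' i).card = ∑ i, (E i).card :=
      Finset.sum_congr rfl fun i _ => hEcard i
    rw [h2] at h1
    exact_mod_cast h1
  -- Step E : final assembly
  have hAz : |(A.card : ℝ) / N - p z| < δ' := hx z
  have hsumE : ∑ i, ((E i).card : ℝ) / N ≤ (n:ℝ) * (2 * (d:ℝ)^(n+2) * δ') := by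
    calc ∑ i, ((E i).card : ℝ) / N ≤ ∑ _i : Fin n, 2 * (d:ℝ)^(n+2) * δ' :=
        Finset.sum_le_sum fun i _ => stepC i
      _ = (n:ℝ) * (2 * (d:ℝ)^(n+2) * δ') := by
          rw [Finset.sum_const, Finset.card_univ, Fintype.card_fin, nsmul_eq_mul]
  have hdiff : |(B.card : ℝ) / N - (A.card : ℝ) / N| ≤ ∑ i, ((E i).card : ℝ) / N := by
    rw [div_sub_div_same, abs_div, abs_of_pos hNpos, ← Finset.sum_div]
    apply div_le_div_of_nonneg_right _ hNpos.le
    rw [abs_sub_le_iff]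
    constructor <;> linarith
  calc |(B.card : ℝ) / N - p z|
      ≤ |(B.card : ℝ) / N - (A.card : ℝ) / N| + |(A.card : ℝ) / N - p z| := by
        have := abs_sub_le ((B.card : ℝ) / N) ((A.card : ℝ) / N) (p z)
        linarith
    _ < ∑ i, ((E i).card : ℝ) / N + δ' := by
        linarith [hdiff]
    _ ≤ (n:ℝ) * (2 * (d:ℝ)^(n+2) * δ') + δ' := by linarith [hsumE]
    _ = δ' * (1 + 2 * (n:ℝ) * (d:ℝ)^(n+2)) := by ring
    _ ≤ δ := htot

/-- Lemma 2.4: for sorted approximating sequences `ξᵢ(N)` whose types converge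
to the marginals, for every `δ > 0` there are `δ' > 0` (with
`3nd^{n+1}δ' ≤ δ`) and `N₀` with
`Δ_sym(N,δ') ⊆ Δ_sym(… : ξ₁(N),…,ξₙ(N);N,δ)` for `N ≥ N₀`; consequently the
`I_sym`-limits via arbitrary sorted witnesses and via the `ξᵢ` coincide. -/
theorem stmt19 (n d : ℕ) (p : (Fin n → Fin d) → ℝ)
    (hp0 : ∀ z, 0 ≤ p z) (hp1 : ∑ z, p z = 1)
    (ξ : (i : Fin n) → (N : ℕ) → Fin N → Fin d)
    (hξmono : ∀ i N, Monotone (ξ i N))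
    (hξconv : ∀ (i : Fin n) (t : Fin d),
      Tendsto (fun N : ℕ =>
          ((Finset.univ.filter fun j : Fin N => ξ i N j = t).card : ℝ) / N)
        atTop (nhds (∑ z : Fin n → Fin d, if z i = t then p z else 0))) :
    (∀ δ : ℝ, 0 < δ → ∃ δ' : ℝ, 0 < δ' ∧
      3 * (n : ℝ) * (d : ℝ) ^ (n + 1) * δ' ≤ δ ∧
      ∃ N0 : ℕ, ∀ N ≥ N0,
        DeltaSymDiscrete n d p N δ' ⊆
          DeltaSymDiscreteXi n d p N (fun i => ξ i N) δ) ∧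
    (⨅ (δ : ℝ) (_ : 0 < δ), Filter.limsup (fun N : ℕ =>
        ((symLogProb n N (DeltaSymDiscrete n d p N δ) : ℝ) : EReal)) atTop)
      = (⨅ (δ : ℝ) (_ : 0 < δ), Filter.limsup (fun N : ℕ =>
        ((symLogProb n N (DeltaSymDiscreteXi n d p N (fun i => ξ i N) δ) : ℝ) : EReal)) atTop) ∧
    (⨅ (δ : ℝ) (_ : 0 < δ), Filter.liminf (fun N : ℕ =>
        ((symLogProb n N (DeltaSymDiscrete n d p N δ) : ℝ) : EReal)) atTop)
      = (⨅ (δ : ℝ) (_ : 0 < δ), Filter.liminf (fun N : ℕ =>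
        ((symLogProb n N (DeltaSymDiscreteXi n d p N (fun i => ξ i N) δ) : ℝ) : EReal)) atTop) := by
  classical
  have hd : ∀ _i : Fin n, 0 < d := by
    intro i
    by_contra hcon
    push_neg at hcon
    obtain rfl : d = 0 := by omega
    have hE : IsEmpty (Fin n → Fin 0) := ⟨fun z => (z i).elim0⟩
    rw [Finset.univ_eq_empty] at hp1
    simp at hp1
  -- the master claim
  have master : ∀ δ : ℝ, 0 < δ → ∃ δ' : ℝ, 0 < δ' ∧
      3 * (n : ℝ) * (d : ℝ) ^ (n + 1) * δ' ≤ δ ∧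
      ∃ N0 : ℕ, ∀ N ≥ N0,
        (DeltaSymDiscrete n d p N δ').Nonempty ∧
        DeltaSymDiscrete n d p N δ' ⊆ DeltaSymDiscreteXi n d p N (fun i => ξ i N) δ ∧
        1 ≤ N := by
    intro δ hδ
    set M : ℝ := ((max n 1 : ℕ) : ℝ) * ((max d 1 : ℕ) : ℝ) ^ (n + 2) with hM
    have hM1 : (1:ℝ) ≤ M := by
      rw [hM]
      have h1 : (1:ℝ) ≤ ((max n 1 : ℕ) : ℝ) := by
        exact_mod_cast Nat.one_le_iff_ne_zero.mpr (by omega)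
      have h2 : (1:ℝ) ≤ ((max d 1 : ℕ) : ℝ) ^ (n + 2) := by
        calc (1:ℝ) = 1 ^ (n + 2) := (one_pow _).symm
          _ ≤ ((max d 1 : ℕ) : ℝ) ^ (n + 2) := by
              apply pow_le_pow_left₀ (by norm_num)
              exact_mod_cast le_max_right d 1
      nlinarith
    have hMpos : (0:ℝ) < 3 * M := by linarith
    set δ' : ℝ := δ / (3 * M) with hδ'
    have hδ'pos : 0 < δ' := div_pos hδ hMpos
    have hδ'M : δ' * (3 * M) = δ := by
      rw [hδ']
      field_simp
    have hdmax : (d:ℝ) ≤ ((max d 1 : ℕ) : ℝ) := by exact_mod_cast le_max_left d 1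
    have hnmax : (n:ℝ) ≤ ((max n 1 : ℕ) : ℝ) := by exact_mod_cast le_max_left n 1
    have hdmax1 : (1:ℝ) ≤ ((max d 1 : ℕ) : ℝ) := by exact_mod_cast le_max_right d 1
    have hpow1 : (d:ℝ) ^ (n+1) ≤ ((max d 1 : ℕ) : ℝ) ^ (n + 2) :=
      le_trans (pow_le_pow_left₀ (Nat.cast_nonneg d) hdmax (n+1))
        (pow_le_pow_right₀ hdmax1 (by omega))
    have hpow2 : (d:ℝ) ^ (n+2) ≤ ((max d 1 : ℕ) : ℝ) ^ (n + 2) :=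
      pow_le_pow_left₀ (Nat.cast_nonneg d) hdmax (n+2)
    have hc1 : 3 * (n : ℝ) * (d : ℝ) ^ (n + 1) * δ' ≤ δ := by
      have h1 : (n : ℝ) * (d : ℝ) ^ (n + 1) ≤ M := by
        rw [hM]
        have := mul_le_mul hnmax hpow1 (by positivity) (by positivity)
        linarith
      calc 3 * (n : ℝ) * (d : ℝ) ^ (n + 1) * δ' ≤ 3 * M * δ' := by nlinarith
        _ = δ := by linarith [hδ'M]
    have htot : δ' * (1 + 2 * (n:ℝ) * (d:ℝ) ^ (n+2)) ≤ δ := by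
      have h1 : (n : ℝ) * (d : ℝ) ^ (n + 2) ≤ M := by
        rw [hM]
        have := mul_le_mul hnmax hpow2 (by positivity) (by positivity)
        linarith
      have h2 : 1 + 2 * (n:ℝ) * (d:ℝ) ^ (n+2) ≤ 3 * M := by nlinarith
      calc δ' * (1 + 2 * (n:ℝ) * (d:ℝ) ^ (n+2)) ≤ δ' * (3 * M) :=
          mul_le_mul_of_nonneg_left h2 hδ'pos.le
        _ = δ := hδ'M
    -- find N0 via the convergence of the types and Archimedes
    have hev1 : ∀ᶠ N : ℕ in atTop, ∀ (i : Fin n) (t : Fin d),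
        |((Finset.univ.filter fun j : Fin N => ξ i N j = t).card : ℝ) / N
          - ∑ z : Fin n → Fin d, (if z i = t then p z else 0)| ≤ δ' := by
      rw [Filter.eventually_all]
      intro i
      rw [Filter.eventually_all]
      intro t
      have hb : ∀ᶠ y : ℝ in nhds (∑ z : Fin n → Fin d, (if z i = t then p z else 0)),
          |y - ∑ z : Fin n → Fin d, (if z i = t then p z else 0)| ≤ δ' := by
        filter_upwards [Metric.ball_mem_nhds _ hδ'pos] with y hy
        rw [Metric.mem_ball, Real.dist_eq] at hy
        exact hy.le
      exact (hξconv i t).eventually hb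
    obtain ⟨N1, hN1⟩ := exists_nat_gt (((Fintype.card (Fin n → Fin d) : ℝ) + 1) / δ')
    have hev2 : ∀ᶠ N : ℕ in atTop,
        ((Fintype.card (Fin n → Fin d) : ℝ) + 1) < N * δ' := by
      filter_upwards [eventually_ge_atTop N1] with N hN
      have : ((Fintype.card (Fin n → Fin d) : ℝ) + 1) / δ' < (N:ℝ) :=
        lt_of_lt_of_le hN1 (by exact_mod_cast hN)
      calc ((Fintype.card (Fin n → Fin d) : ℝ) + 1)
          = (((Fintype.card (Fin n → Fin d) : ℝ) + 1) / δ') * δ' := by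
            field_simp
        _ < (N:ℝ) * δ' := by
            exact mul_lt_mul_of_pos_right this hδ'pos
    have hev : ∀ᶠ N : ℕ in atTop, (∀ (i : Fin n) (t : Fin d),
        |((Finset.univ.filter fun j : Fin N => ξ i N j = t).card : ℝ) / N
          - ∑ z : Fin n → Fin d, (if z i = t then p z else 0)| ≤ δ') ∧
        ((Fintype.card (Fin n → Fin d) : ℝ) + 1) < N * δ' ∧ 1 ≤ N :=
      hev1.and (hev2.and (eventually_ge_atTop 1))
    rw [eventually_atTop] at hev
    obtain ⟨N0, hN0⟩ := hev
    refine ⟨δ', hδ'pos, hc1, N0, fun N hN => ?_⟩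
    obtain ⟨hclose, hthresh, hN1'⟩ := hN0 N hN
    refine ⟨delta_nonempty n d p hp0 hp1 δ' N hN1' hthresh, ?_, hN1'⟩
    exact containment_aux hN1' p (fun i => ξ i N) (fun i => hξmono i N) hd δ δ'
      hδ'pos hclose htot
  refine ⟨fun δ hδ => ?_, ?_, ?_⟩
  · obtain ⟨δ', h1, h2, N0, h3⟩ := master δ hδ
    exact ⟨δ', h1, h2, N0, fun N hN => (h3 N hN).2.1⟩
  all_goals {
    apply le_antisymm
    · refine le_iInf₂ fun δ hδ => ?_
      obtain ⟨δ', hδ'pos, _, N0, hN0⟩ := master δ hδ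
      refine le_trans (iInf₂_le δ' hδ'pos) ?_
      have hle : ∀ᶠ N : ℕ in atTop,
          symLogProb n N (DeltaSymDiscrete n d p N δ')
            ≤ symLogProb n N (DeltaSymDiscreteXi n d p N (fun i => ξ i N) δ) := by
        filter_upwards [eventually_ge_atTop N0] with N hN
        obtain ⟨hne, hsub, hN1⟩ := hN0 N hN
        exact symLogProb_mono hN1 hne hsub
      have hle' : (fun N : ℕ =>
          ((symLogProb n N (DeltaSymDiscrete n d p N δ') : ℝ) : EReal)) ≤ᶠ[atTop]
          (fun N : ℕ =>
          ((symLogProb n N (DeltaSymDiscreteXi n d p N (fun i => ξ i N) δ) : ℝ) : EReal)) := by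
        filter_upwards [hle] with N h
        exact EReal.coe_le_coe_iff.mpr h
      first
        | exact Filter.limsup_le_limsup hle'
        | exact Filter.liminf_le_liminf hle'
    · refine le_iInf₂ fun δ hδ => ?_
      obtain ⟨δ', hδ'pos, _, N0, hN0⟩ := master δ hδ
      refine le_trans (iInf₂_le δ hδ) ?_
      have hle : ∀ᶠ N : ℕ in atTop,
          symLogProb n N (DeltaSymDiscreteXi n d p N (fun i => ξ i N) δ)
            ≤ symLogProb n N (DeltaSymDiscrete n d p N δ) := by
        filter_upwards [eventually_ge_atTop N0] with N hN
        obtain ⟨hne, hsub, hN1⟩ := hN0 N hN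
        have hXisub : DeltaSymDiscreteXi n d p N (fun i => ξ i N) δ
            ⊆ DeltaSymDiscrete n d p N δ := by
          intro σ hσ
          exact ⟨fun i => ξ i N, fun i => hξmono i N, hσ⟩
        have hXine : (DeltaSymDiscreteXi n d p N (fun i => ξ i N) δ).Nonempty :=
          hne.mono hsub
        exact symLogProb_mono hN1 hXine hXisub
      have hle' : (fun N : ℕ =>
          ((symLogProb n N (DeltaSymDiscreteXi n d p N (fun i => ξ i N) δ) : ℝ) : EReal))
          ≤ᶠ[atTop]
          (fun N : ℕ =>
          ((symLogProb n N (DeltaSymDiscrete n d p N δ) : ℝ) : EReal)) := by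
        filter_upwards [hle] with N h
        exact EReal.coe_le_coe_iff.mpr h
      first
        | exact Filter.limsup_le_limsup hle'
        | exact Filter.liminf_le_liminf hle'
  }
end
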